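/- arXiv:1008.3678 — 7 statements merged into one kernel-verified Lean document; each statement's English description precedes it below -/
import Mathlib

section
/- Lemma 6.1: ℙ({x ∈ Δ(R,[0,r]) : K(t;x) ≥ γ for every t ∈ [0,r]}) ≤ exp(−(β/2)(γ²−1)(R−γ)) · exp(2R + γ·ln γ). -/
/-!
On the event, `K ≥ γ` on `[0, r]`, so the energy is at least `γ² r / 2` and the unnormalised
weight of the event is at most `e^{-βγ²r/2} vol(Δ)`, with `vol(Δ) ≤ r^R / R! ≤ e^{R+1}`.
The partition function is bounded below by the contribution of an explicit box of configurations: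
`γ` particles packed evenly into `[0, 0.61]`, which brings `K` down to about `0`, followed by one
particle in each window `(k + 1, k + 1.37)`. On the box `0 ≤ K ≤ K(·; upper corner)`, and the
energy of the upper corner is an explicit sum of cubes, at most `(γ² r - (γ² - 1)(R - γ)) / 2`,
while the box has volume `(0.61/γ)^γ 0.37^(R-γ) ≥ e^{1-R} γ^{-γ}`.
When `γ = 1` or `R = γ` the bound is at least `1`.
-/

open Real MeasureTheory Finset
open scoped ENNReal

lemma Equiv.Perm.eq_of_strictMono_comp {α : Type*} [PartialOrder α] {n : ℕ} {f : Fin n → α}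
    {σ τ : Equiv.Perm (Fin n)} (hσ : StrictMono (f ∘ σ)) (hτ : StrictMono (f ∘ τ)) : σ = τ :=
  Equiv.ext fun i => (hσ.injective.of_comp_right σ.surjective)
    (congrFun (Tuple.unique_monotone hσ.monotone hτ.monotone) i)

namespace Jellium

section Gibbs

variable {α : Type*} [MeasurableSpace α]

noncomputable def gibbsMeasure (μ : Measure α) (Δ : Set α) (β : ℝ) (U : α → ℝ) : Measure α :=
  (∫⁻ x in Δ, ENNReal.ofReal (exp (-β * U x)) ∂μ)⁻¹ •
    ((μ.restrict Δ).withDensity fun x => ENNReal.ofReal (exp (-β * U x)))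

variable (μ : Measure α) (Δ : Set α) {β : ℝ} {U : α → ℝ}

lemma gibbsMeasure_apply (s : Set α) : gibbsMeasure μ Δ β U s =
    (∫⁻ x in Δ, ENNReal.ofReal (exp (-β * U x)) ∂μ)⁻¹ *
      (μ.restrict Δ).withDensity (fun x => ENNReal.ofReal (exp (-β * U x))) s :=
  rfl

lemma gibbsMeasure_le_one (s : Set α) : gibbsMeasure μ Δ β U s ≤ 1 :=
  calc gibbsMeasure μ Δ β U s ≤ gibbsMeasure μ Δ β U Set.univ := measure_mono (Set.subset_univ s)
    _ ≤ 1 := by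
        rw [gibbsMeasure_apply, withDensity_apply _ MeasurableSet.univ, Measure.restrict_univ]
        exact ENNReal.inv_mul_le_one _

lemma gibbsMeasure_setOf_le_le (hβ : 0 ≤ β) (hU : Measurable U) {B : Set α}
    (hB : MeasurableSet B) (hBΔ : B ⊆ Δ) {a b : ℝ} (hUB : ∀ x ∈ B, U x ≤ b) :
    gibbsMeasure μ Δ β U {x | a ≤ U x} ≤ ENNReal.ofReal (exp (-β * (a - b))) * (μ Δ / μ B) := by
  have hL : MeasurableSet {x | a ≤ U x} := measurableSet_le measurable_const hU
  have hweight {c u : ℝ} (h : c ≤ u) :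
      ENNReal.ofReal (exp (-β * u)) ≤ ENNReal.ofReal (exp (-β * c)) :=
    ENNReal.ofReal_le_ofReal (exp_le_exp.2 (by nlinarith))
  have hnum : (μ.restrict Δ).withDensity (fun x => ENNReal.ofReal (exp (-β * U x)))
      {x | a ≤ U x} ≤ ENNReal.ofReal (exp (-β * a)) * μ Δ := by
    rw [withDensity_apply _ hL]
    calc _ ≤ ∫⁻ _ in {x | a ≤ U x}, ENNReal.ofReal (exp (-β * a)) ∂μ.restrict Δ :=
          setLIntegral_mono measurable_const fun x hx => hweight hx
      _ ≤ _ := by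
          rw [setLIntegral_const, Measure.restrict_apply hL]
          gcongr
          exact Set.inter_subset_right
  have hZ : ENNReal.ofReal (exp (-β * b)) * μ B ≤
      ∫⁻ x in Δ, ENNReal.ofReal (exp (-β * U x)) ∂μ :=
    calc _ = ∫⁻ _ in B, ENNReal.ofReal (exp (-β * b)) ∂μ := (setLIntegral_const _ _).symm
      _ ≤ ∫⁻ x in B, ENNReal.ofReal (exp (-β * U x)) ∂μ :=
          setLIntegral_mono' hB fun x hx => hweight (hUB x hx)
      _ ≤ _ := lintegral_mono_set hBΔ
  have hc : ENNReal.ofReal (exp (-β * b)) ≠ 0 := (ENNReal.ofReal_pos.2 (exp_pos _)).ne'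
  calc gibbsMeasure μ Δ β U {x | a ≤ U x}
      ≤ (ENNReal.ofReal (exp (-β * b)) * μ B)⁻¹ * (ENNReal.ofReal (exp (-β * a)) * μ Δ) := by
        rw [gibbsMeasure_apply]; gcongr
    _ = ENNReal.ofReal (exp (-β * a)) / ENNReal.ofReal (exp (-β * b)) * (μ Δ / μ B) := by
        rw [ENNReal.mul_inv (Or.inl hc) (Or.inl ENNReal.ofReal_ne_top)]
        simp only [div_eq_mul_inv]
        ring
    _ = _ := by rw [← ENNReal.ofReal_div_of_pos (exp_pos _), ← exp_sub, mul_sub]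

end Gibbs

lemma measurableSet_setOf_strictMono (R : ℕ) : MeasurableSet {x : Fin R → ℝ | StrictMono x} := by
  simp only [StrictMono, Set.ofPred_forall]
  exact .iInter fun i => .iInter fun j => .iInter fun _ =>
    measurableSet_lt (measurable_pi_apply i) (measurable_pi_apply j)

/-- The `R!` relabellings `x ↦ x ∘ σ` of the ordered configurations are disjoint, measure
preserving, and land in the cube `s ^ R`. -/
lemma factorial_mul_volume_setOf_strictMono_le (R : ℕ) {s : Set ℝ} (hs : MeasurableSet s) :
    (R.factorial : ℝ≥0∞) * volume {x : Fin R → ℝ | StrictMono x ∧ ∀ i, x i ∈ s} ≤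
      volume s ^ R := by
  set A := {x : Fin R → ℝ | StrictMono x ∧ ∀ i, x i ∈ s}
  have hA : MeasurableSet A := by
    have hcoord : MeasurableSet {x : Fin R → ℝ | ∀ i, x i ∈ s} := by
      simp only [Set.ofPred_forall]; exact .iInter fun i => measurable_pi_apply i hs
    exact (measurableSet_setOf_strictMono R).inter hcoord
  let Φ (σ : Equiv.Perm (Fin R)) := MeasurableEquiv.arrowCongr' σ.symm (MeasurableEquiv.refl ℝ)
  have hΦ (σ) : MeasurePreserving (Φ σ) :=
    volume_preserving_arrowCongr' _ _ (MeasurePreserving.id volume)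
  have hdisj : Pairwise (Function.onFun Disjoint fun σ => Φ σ ⁻¹' A) := fun σ τ hστ =>
    Set.disjoint_left.2 fun y hσ hτ => hστ (Equiv.Perm.eq_of_strictMono_comp hσ.1 hτ.1)
  have hcube : (⋃ σ, Φ σ ⁻¹' A) ⊆ Set.univ.pi fun _ => s := by
    refine Set.iUnion_subset fun σ y hy i _ => ?_
    simpa [Φ, MeasurableEquiv.arrowCongr', Equiv.arrowCongr'] using hy.2 (σ.symm i)
  calc (R.factorial : ℝ≥0∞) * volume A = ∑ σ : Equiv.Perm (Fin R), volume (Φ σ ⁻¹' A) := by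
        simp [(hΦ _).measure_preimage hA.nullMeasurableSet, Fintype.card_perm]
    _ = volume (⋃ σ, Φ σ ⁻¹' A) :=
        (tsum_fintype _).symm.trans (measure_iUnion hdisj fun σ => (Φ σ).measurable hA).symm
    _ ≤ volume (Set.univ.pi fun _ => s) := measure_mono hcube
    _ = volume s ^ R := by simp [volume_pi_pi]

lemma volume_simplex_le (R : ℕ) {r : ℝ} (hr : 0 ≤ r) :
    volume {x : Fin R → ℝ | StrictMono x ∧ ∀ i, x i ∈ Set.Ioo 0 r} ≤ ENNReal.ofReal (exp r) := by
  have h := factorial_mul_volume_setOf_strictMono_le R (measurableSet_Ioo (a := 0) (b := r))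
  rw [Real.volume_Ioo, sub_zero, mul_comm,
    ← ENNReal.le_div_iff_mul_le (Or.inl (by positivity)) (Or.inl (by simp)),
    ← ENNReal.ofReal_pow hr, ← ENNReal.ofReal_natCast,
    ← ENNReal.ofReal_div_of_pos (by exact_mod_cast R.factorial_pos)] at h
  exact h.trans (ENNReal.ofReal_le_ofReal (pow_div_factorial_le_exp r hr R))

section Excess

variable {R : ℕ}

/-- The paper's `K(t; x)`, with the external charge `γ` at `0`. -/
noncomputable def excess (γ : ℝ) (x : Fin R → ℝ) (t : ℝ) : ℝ := γ + t - #{i | x i ≤ t}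

lemma monotone_card_filter_le (x : Fin R → ℝ) : Monotone fun t => (#{i | x i ≤ t} : ℝ) :=
  fun _ _ hst => Nat.mono_cast <| card_le_card <| monotone_filter_right _ fun _ _ h => h.trans hst

lemma excess_le_excess {x y : Fin R → ℝ} (hxy : x ≤ y) (γ t : ℝ) :
    excess γ x t ≤ excess γ y t := by
  unfold excess
  gcongr with i
  exact hxy i

lemma intervalIntegrable_excess_sq (γ : ℝ) (x : Fin R → ℝ) (a b : ℝ) :
    IntervalIntegrable (fun t => excess γ x t ^ 2) volume a b := by
  set N := fun t => (#{i | x i ≤ t} : ℝ)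
  have hN : Monotone N := monotone_card_filter_le x
  have hN2 : Monotone fun t => N t ^ 2 := fun s t hst =>
    pow_le_pow_left₀ (Nat.cast_nonneg _) (hN hst) 2
  have hsplit : (fun t => excess γ x t ^ 2) =
      fun t => (γ + t) ^ 2 - 2 * ((γ + t) * N t) + N t ^ 2 := by
    funext t; simp only [excess, N]; ring
  rw [hsplit]
  exact (((by fun_prop : Continuous fun t => (γ + t) ^ 2).intervalIntegrable a b).sub
    ((hN.intervalIntegrable.continuousOn_mul (by fun_prop)).const_mul 2)).add
    hN2.intervalIntegrable

lemma measurable_integral_excess_sq (γ a b : ℝ) :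
    Measurable fun x : Fin R → ℝ => ∫ t in a..b, excess γ x t ^ 2 := by
  have hjoint : Measurable fun p : (Fin R → ℝ) × ℝ => excess γ p.1 p.2 ^ 2 := by
    simp only [excess, card_filter]
    push_cast
    refine ((measurable_const.add measurable_snd).sub
      (Finset.measurable_sum _ fun i _ => ?_)).pow_const 2
    exact Measurable.ite
      (measurableSet_le ((measurable_pi_apply i).comp measurable_fst) measurable_snd)
      measurable_const measurable_const
  simp only [intervalIntegral]
  exact (hjoint.stronglyMeasurable.integral_prod_right'
    (f := fun p => excess γ p.1 p.2 ^ 2)).measurable.sub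
    hjoint.stronglyMeasurable.integral_prod_right'.measurable

lemma sq_mul_le_integral_excess_sq {γ r : ℝ} (hγ : 0 ≤ γ) (hr : 0 ≤ r) {x : Fin R → ℝ}
    (hx : ∀ t ∈ Set.Icc 0 r, γ ≤ excess γ x t) : γ ^ 2 * r ≤ ∫ t in 0..r, excess γ x t ^ 2 := by
  have h := intervalIntegral.integral_mono_on hr intervalIntegrable_const
    (intervalIntegrable_excess_sq γ x 0 r) fun t ht => pow_le_pow_left₀ hγ (hx t ht) 2
  simpa [mul_comm] using h

lemma card_filter_le_eq_of_mem_Ioo {p : ℕ → ℝ} (hp : Monotone p) {j : ℕ} (hj : j ≤ R) {t : ℝ}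
    (ht : t ∈ Set.Ioo (p j) (p (j + 1))) : #{i : Fin R | p (i + 1) ≤ t} = j := by
  have hfilter : univ.filter (fun i : Fin R => p (i + 1) ≤ t) =
      univ.filter fun i : Fin R => (i : ℕ) < j := by
    ext i
    simp only [mem_filter, mem_univ, true_and]
    constructor
    · intro h
      by_contra! hji
      exact (ht.2.trans_le (hp (by omega))).not_ge h
    · exact fun h => (hp (by omega)).trans ht.1.le
  rw [hfilter, Fin.card_filter_val_lt, min_eq_right hj]

lemma integral_sq_add_left (c a b : ℝ) :
    ∫ t in a..b, (c + t) ^ 2 = ((c + b) ^ 3 - (c + a) ^ 3) / 3 := by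
  rw [intervalIntegral.integral_comp_add_left (fun t => t ^ 2), integral_pow]
  norm_num

/-- `∫ t in p j..p (j + 1), (γ - j + t) ^ 2`. -/
noncomputable def segmentEnergy (γ : ℝ) (p : ℕ → ℝ) (j : ℕ) : ℝ :=
  ((γ - j + p (j + 1)) ^ 3 - (γ - j + p j) ^ 3) / 3

/-- On `(p j, p (j + 1))` exactly `j` particles lie to the left, so the excess is `γ - j + t`. -/
lemma integral_excess_sq_eq_sum (γ : ℝ) {p : ℕ → ℝ} (hp : Monotone p) :
    ∫ t in p 0..p (R + 1), excess γ (fun i : Fin R => p (i + 1)) t ^ 2 =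
      ∑ j ∈ range (R + 1), segmentEnergy γ p j := by
  rw [← intervalIntegral.sum_integral_adjacent_intervals fun j _ =>
    intervalIntegrable_excess_sq γ _ _ _]
  refine sum_congr rfl fun j hj => ?_
  rw [segmentEnergy, ← integral_sq_add_left]
  refine intervalIntegral.integral_congr_ae ?_
  filter_upwards [Measure.ae_ne volume (p (j + 1))] with t hne ht
  rw [Set.uIoc_of_le (hp (Nat.le_succ j))] at ht
  rw [excess, card_filter_le_eq_of_mem_Ioo hp (Nat.lt_succ_iff.1 (mem_range.1 hj))
    ⟨ht.1, lt_of_le_of_ne ht.2 hne⟩]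
  ring

end Excess

lemma cube_sub_cube_div_three_le {a b c : ℝ} (hb : 0 ≤ b) (hba : b ≤ a) (hac : a ≤ c) :
    (a ^ 3 - b ^ 3) / 3 ≤ (a - b) * c ^ 2 := by
  have hsq : a ^ 2 + a * b + b ^ 2 ≤ 3 * c ^ 2 := by nlinarith
  calc (a ^ 3 - b ^ 3) / 3 = (a - b) * ((a ^ 2 + a * b + b ^ 2) / 3) := by ring
    _ ≤ (a - b) * c ^ 2 := mul_le_mul_of_nonneg_left (by linarith) (by linarith)

lemma sum_range_sq_sub_add (n : ℕ) (η : ℝ) :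
    ∑ j ∈ range n, ((n : ℝ) - j + η) ^ 2 =
      n * (n + 1) * (2 * n + 1) / 6 + η * n * (n + 1) + n * η ^ 2 := by
  induction n with
  | zero => simp
  | succ n ih =>
    rw [sum_range_succ']
    push_cast
    simp only [add_sub_add_right_eq_sub, ih]
    ring

section Box

variable (γ R : ℕ) (r η δ : ℝ)

/-- Cell `i` of the comparison box is `(knot (i + 1) - cellWidth i, knot (i + 1))`: the first `γ`
cells tile `[0, η]` and cell `γ + k` is `(k + 1, k + 1 + δ)`. The outer knots are `knot 0 = 0`
and `knot (R + 1) = r`, so that `knot` also lists the breakpoints of the upper corner's excess. -/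
noncomputable def knot (j : ℕ) : ℝ :=
  if j ≤ γ then η * j / γ else if j ≤ R then j - γ + δ else r

noncomputable def cellWidth (i : ℕ) : ℝ := if i < γ then η / γ else δ

def comparisonBox : Set (Fin R → ℝ) :=
  Set.univ.pi fun i => Set.Ioo (knot γ R r η δ (i + 1) - cellWidth γ η δ i) (knot γ R r η δ (i + 1))

variable {γ R r η δ} {j : ℕ}

lemma knot_zero : knot γ R r η δ 0 = 0 := by simp [knot]

lemma knot_of_le (hj : j ≤ γ) : knot γ R r η δ j = η * j / γ := if_pos hj

lemma knot_of_lt_of_le (hγj : γ < j) (hjR : j ≤ R) : knot γ R r η δ j = j - γ + δ := by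
  rw [knot, if_neg hγj.not_ge, if_pos hjR]

lemma knot_of_lt (hγR : γ < R) (hRj : R < j) : knot γ R r η δ j = r := by
  rw [knot, if_neg (by omega), if_neg hRj.not_ge]

lemma cellWidth_of_lt (hj : j < γ) : cellWidth γ η δ j = η / γ := if_pos hj

lemma cellWidth_of_le (hj : γ ≤ j) : cellWidth γ η δ j = δ := if_neg hj.not_gt

lemma cellWidth_nonneg (hη : 0 ≤ η) (hδ : 0 ≤ δ) : 0 ≤ cellWidth γ η δ j := by
  unfold cellWidth; split_ifs <;> positivity

lemma knot_add_cellWidth_le (hγ : 0 < γ) (hη : η ≤ 1) (hδ : δ ≤ 1) (hj : j < R) :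
    knot γ R r η δ j + cellWidth γ η δ j ≤ knot γ R r η δ (j + 1) := by
  rcases lt_trichotomy j γ with h | rfl | h
  · rw [knot_of_le h.le, knot_of_le h, cellWidth_of_lt h]
    push_cast
    exact le_of_eq (by ring)
  · rw [knot_of_le le_rfl, knot_of_lt_of_le (by omega) hj, cellWidth_of_le le_rfl]
    have : (j : ℝ) ≠ 0 := by exact_mod_cast hγ.ne'
    push_cast
    field_simp
    linarith
  · rw [knot_of_lt_of_le h hj.le, knot_of_lt_of_le (by omega) hj, cellWidth_of_le h.le]
    push_cast
    linarith

lemma monotone_knot (hγ : 0 < γ) (hγR : γ < R) (hRr : (R : ℝ) ≤ r) (hη : 0 ≤ η) (hη1 : η ≤ 1)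
    (hδ : 0 ≤ δ) (hδ1 : δ ≤ 1) : Monotone (knot γ R r η δ) := by
  refine monotone_nat_of_le_succ fun j => ?_
  rcases lt_trichotomy j R with h | rfl | h
  · exact le_of_add_le_of_nonneg_left (knot_add_cellWidth_le hγ hη1 hδ1 h) (cellWidth_nonneg hη hδ)
  · rw [knot_of_lt_of_le hγR le_rfl, knot_of_lt hγR (by omega)]
    have : (1 : ℝ) ≤ γ := by exact_mod_cast hγ
    linarith
  · rw [knot_of_lt hγR h, knot_of_lt hγR (by omega)]

lemma comparisonBox_subset (hγ : 0 < γ) (hγR : γ < R) (hRr : (R : ℝ) ≤ r) (hη : 0 ≤ η)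
    (hη1 : η ≤ 1) (hδ : 0 ≤ δ) (hδ1 : δ ≤ 1) :
    comparisonBox γ R r η δ ⊆ {x | StrictMono x ∧ ∀ i, x i ∈ Set.Ioo 0 r} := by
  have hmono := monotone_knot hγ hγR hRr hη hη1 hδ hδ1
  have hlo (i : Fin R) : knot γ R r η δ i ≤ knot γ R r η δ (i + 1) - cellWidth γ η δ i := by
    linarith [knot_add_cellWidth_le hγ hη1 hδ1 (r := r) i.isLt]
  intro x hx
  have hx' (i : Fin R) := hx i (Set.mem_univ i)
  refine ⟨fun i j hij => ?_, fun i => ⟨?_, ?_⟩⟩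
  · calc x i < knot γ R r η δ (i + 1) := (hx' i).2
      _ ≤ knot γ R r η δ j := hmono (Nat.succ_le_of_lt hij)
      _ ≤ _ := hlo j
      _ < x j := (hx' j).1
  · calc (0 : ℝ) = knot γ R r η δ 0 := knot_zero.symm
      _ ≤ knot γ R r η δ i := hmono (Nat.zero_le _)
      _ ≤ _ := hlo i
      _ < x i := (hx' i).1
  · calc x i < knot γ R r η δ (i + 1) := (hx' i).2
      _ ≤ knot γ R r η δ (R + 1) := hmono (by omega)
      _ = r := knot_of_lt hγR (by omega)

variable {x : Fin R → ℝ}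

/-- Particle `i` of a box configuration lies to the right of `i + 1 - γ`. -/
lemma card_filter_le_le_of_mem_comparisonBox (hx : x ∈ comparisonBox γ R r η δ) {t : ℝ}
    (ht : 0 ≤ t) : (#{i | x i ≤ t} : ℝ) ≤ γ + t := by
  have hcount (i : Fin R) (hxt : x i ≤ t) : (i : ℕ) < ⌊γ + t⌋₊ := by
    refine Nat.lt_of_succ_le (Nat.le_floor ?_)
    have hlo := (hx i (Set.mem_univ i)).1
    push_cast
    rcases lt_or_ge (i : ℕ) γ with h | h
    · have : ((i : ℕ) : ℝ) + 1 ≤ γ := by exact_mod_cast h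
      linarith
    · rw [knot_of_lt_of_le (by omega) (by omega), cellWidth_of_le h] at hlo
      push_cast at hlo
      linarith
  calc (#{i | x i ≤ t} : ℝ) ≤ #{i : Fin R | (i : ℕ) < ⌊γ + t⌋₊} := by
        exact_mod_cast card_le_card (monotone_filter_right _ fun i _ => hcount i)
    _ ≤ ⌊γ + t⌋₊ := by
        rw [Fin.card_filter_val_lt]; exact_mod_cast min_le_right _ _
    _ ≤ γ + t := Nat.floor_le (by positivity)

lemma integral_excess_sq_le_integral_excess_sq_knot (hx : x ∈ comparisonBox γ R r η δ)
    (hr : 0 ≤ r) : ∫ t in 0..r, excess γ x t ^ 2 ≤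
      ∫ t in 0..r, excess γ (fun i : Fin R => knot γ R r η δ (i + 1)) t ^ 2 := by
  refine intervalIntegral.integral_mono_on hr (intervalIntegrable_excess_sq _ _ _ _)
    (intervalIntegrable_excess_sq _ _ _ _) fun t ht => ?_
  have hnonneg : 0 ≤ excess γ x t := by
    simpa [excess] using card_filter_le_le_of_mem_comparisonBox hx ht.1
  exact pow_le_pow_left₀ hnonneg (excess_le_excess (fun i => (hx i (Set.mem_univ i)).2.le) _ _) 2

lemma segmentEnergy_knot_le_of_lt (hη : 0 ≤ η) (hj : j < γ) :
    segmentEnergy γ (knot γ R r η δ) j ≤ η / γ * ((γ : ℝ) - j + η) ^ 2 := by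
  have hγ' : (0 : ℝ) < γ := by exact_mod_cast (Nat.zero_le j).trans_lt hj
  have hj1 : (j : ℝ) + 1 ≤ γ := by exact_mod_cast hj
  rw [segmentEnergy, knot_of_le hj, knot_of_le hj.le]
  push_cast
  have hstep : η * j / γ ≤ η * (j + 1) / γ := by gcongr; linarith
  have htop : η * (j + 1) / γ ≤ η := by rw [div_le_iff₀ hγ']; nlinarith
  calc _ ≤ ((γ - j + η * (j + 1) / γ) - (γ - j + η * j / γ)) * ((γ : ℝ) - j + η) ^ 2 :=
        cube_sub_cube_div_three_le (by linarith [(by positivity : 0 ≤ η * j / γ)])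
          (by linarith) (by linarith)
    _ = _ := by field_simp; ring

lemma segmentEnergy_knot_self (hγ : 0 < γ) (hγR : γ < R) :
    segmentEnergy γ (knot γ R r η δ) γ = ((1 + δ) ^ 3 - η ^ 3) / 3 := by
  have hγ' : (γ : ℝ) ≠ 0 := by exact_mod_cast hγ.ne'
  rw [segmentEnergy, knot_of_le le_rfl, knot_of_lt_of_le (by omega) (by omega)]
  field_simp
  push_cast
  ring

lemma segmentEnergy_knot_of_lt_of_lt (hγj : γ < j) (hjR : j < R) :
    segmentEnergy γ (knot γ R r η δ) j = ((1 + δ) ^ 3 - δ ^ 3) / 3 := by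
  rw [segmentEnergy, knot_of_lt_of_le hγj hjR.le, knot_of_lt_of_le (by omega) hjR]
  push_cast
  ring_nf

lemma segmentEnergy_knot_last (hγR : γ < R) :
    segmentEnergy γ (knot γ R r η δ) R = ((γ + r - R) ^ 3 - δ ^ 3) / 3 := by
  rw [segmentEnergy, knot_of_lt_of_le hγR le_rfl, knot_of_lt hγR (Nat.lt_succ_self R)]
  ring_nf

lemma integral_excess_sq_knot_le (hγ : 0 < γ) (hγR : γ < R) (hRr : (R : ℝ) ≤ r) (hη : 0 ≤ η)
    (hη1 : η ≤ 1) (hδ : 0 ≤ δ) (hδ1 : δ ≤ 1) :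
    ∫ t in 0..r, excess γ (fun i : Fin R => knot γ R r η δ (i + 1)) t ^ 2 ≤
      η * ((γ + 1) * (2 * γ + 1) / 6 + η * (γ + 1) + η ^ 2) + ((1 + δ) ^ 3 - η ^ 3) / 3 +
        (R - γ - 1) * ((1 + δ) ^ 3 - δ ^ 3) / 3 + ((γ + r - R) ^ 3 - δ ^ 3) / 3 := by
  have hsum := integral_excess_sq_eq_sum (R := R) γ (monotone_knot hγ hγR hRr hη hη1 hδ hδ1)
  rw [knot_zero, knot_of_lt hγR (Nat.lt_succ_self R)] at hsum
  have hhead : ∑ j ∈ range γ, segmentEnergy γ (knot γ R r η δ) j ≤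
      η * ((γ + 1) * (2 * γ + 1) / 6 + η * (γ + 1) + η ^ 2) := by
    refine (sum_le_sum fun j hj => segmentEnergy_knot_le_of_lt hη (mem_range.1 hj)).trans_eq ?_
    have hγ' : (γ : ℝ) ≠ 0 := by exact_mod_cast hγ.ne'
    rw [← mul_sum, sum_range_sq_sub_add]
    field_simp
  obtain ⟨M, hM⟩ : ∃ M, R = γ + 1 + M := ⟨R - γ - 1, by omega⟩
  have hbulk : ∑ k ∈ range M, segmentEnergy γ (knot γ R r η δ) (γ + 1 + k) =
      (R - γ - 1) * (((1 + δ) ^ 3 - δ ^ 3) / 3) := by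
    rw [sum_congr rfl fun k hk => segmentEnergy_knot_of_lt_of_lt (by omega)
      (by have := mem_range.1 hk; omega), sum_const, card_range, nsmul_eq_mul, hM]
    push_cast
    ring
  rw [hsum, hM, sum_range_succ, sum_range_add, sum_range_succ, ← hM, hbulk,
    segmentEnergy_knot_self hγ hγR, segmentEnergy_knot_last hγR]
  linarith

lemma volume_comparisonBox (hγR : γ ≤ R) (hη : 0 ≤ η) (hδ : 0 ≤ δ) :
    volume (comparisonBox γ R r η δ) = ENNReal.ofReal ((η / γ) ^ γ * δ ^ (R - γ)) := by
  rw [comparisonBox, volume_pi_pi]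
  simp_rw [Real.volume_Ioo, sub_sub_cancel]
  rw [← ENNReal.ofReal_prod_of_nonneg fun i _ => cellWidth_nonneg hη hδ,
    Fin.prod_univ_eq_prod_range (fun i => cellWidth γ η δ i) R]
  obtain ⟨M, rfl⟩ := Nat.exists_eq_add_of_le hγR
  rw [prod_range_add, prod_congr rfl fun j hj => cellWidth_of_lt (mem_range.1 hj),
    prod_congr rfl fun k _ => cellWidth_of_le (Nat.le_add_right γ k), prod_const, prod_const,
    card_range, card_range, Nat.add_sub_cancel_left]

end Box

lemma exp_neg_one_le : exp (-1) ≤ 37 / 100 := exp_neg_one_lt_d9.le.trans (by norm_num)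

lemma exp_neg_half_le : exp (-(1 / 2)) ≤ 61 / 100 := by
  have hsq : exp (-(1 / 2)) ^ 2 = exp (-1) := by rw [← exp_nat_mul]; norm_num
  nlinarith [exp_pos (-(1 / 2)), exp_neg_one_lt_d9]

/-- The widths `61/100 ≥ e^{-1/2}` and `37/100 ≥ e^{-1}` make the box volume times
`e^{2R} γ^γ` at least `e^{R + γ/2} ≥ e^{R+1}`. -/
lemma exp_le_comparisonBox_volume_mul {γ R : ℕ} (hγ : 2 ≤ γ) (hγR : γ ≤ R) :
    exp (R + 1) ≤ ((61 / 100) / γ) ^ γ * (37 / 100) ^ (R - γ) * exp (2 * R + γ * log γ) := by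
  have hγ' : (0 : ℝ) < γ := by positivity
  have hγ2 : (2 : ℝ) ≤ γ := by exact_mod_cast hγ
  have hhead : exp (-(1 / 2)) ^ γ ≤ (61 / 100) ^ γ :=
    pow_le_pow_left₀ (exp_pos _).le exp_neg_half_le γ
  have hbulk : exp (-1) ^ (R - γ) ≤ (37 / 100) ^ (R - γ) :=
    pow_le_pow_left₀ (exp_pos _).le exp_neg_one_le (R - γ)
  have hγpow : (61 / 100 / (γ : ℝ)) ^ γ * (γ : ℝ) ^ γ = (61 / 100) ^ γ := by
    rw [← mul_pow, div_mul_cancel₀ _ hγ'.ne']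
  calc exp (R + 1) ≤ exp (-(1 / 2)) ^ γ * exp (-1) ^ (R - γ) * exp (2 * R) := by
        rw [← exp_nat_mul, ← exp_nat_mul, ← exp_add, ← exp_add, Nat.cast_sub hγR]
        exact exp_le_exp.2 (by linarith)
    _ ≤ (61 / 100) ^ γ * (37 / 100) ^ (R - γ) * exp (2 * R) := by gcongr
    _ = _ := by
        rw [exp_add, exp_nat_mul, exp_log hγ', ← hγpow]
        ring

lemma energy_budget {γ R : ℕ} {r : ℝ} (hγ : 2 ≤ γ) (hγR : γ < R) (hRr : (R : ℝ) ≤ r)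
    (hrR : r < R + 1) :
    61 / 100 * ((γ + 1) * (2 * γ + 1) / 6 + 61 / 100 * (γ + 1) + (61 / 100) ^ 2) +
        ((1 + 37 / 100) ^ 3 - (61 / 100) ^ 3) / 3 +
        (R - γ - 1) * ((1 + 37 / 100) ^ 3 - (37 / 100) ^ 3) / 3 +
        ((γ + r - R) ^ 3 - (37 / 100) ^ 3) / 3 ≤ γ ^ 2 * r - (γ ^ 2 - 1) * (R - γ) := by
  have hg : (2 : ℝ) ≤ γ := by exact_mod_cast hγ
  have hm : (γ : ℝ) + 1 ≤ R := by exact_mod_cast hγR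
  obtain ⟨f, hf0, hf1, rfl⟩ : ∃ f : ℝ, 0 ≤ f ∧ f ≤ 1 ∧ r = R + f :=
    ⟨r - R, by linarith, by linarith, by ring⟩
  have hg2 := sub_nonneg.2 hg
  have hf1' := sub_nonneg.2 hf1
  nlinarith [mul_nonneg (mul_nonneg hg2 hg2) hg2, mul_nonneg hg2 hf1', mul_nonneg hf0 hf1',
    mul_nonneg (mul_nonneg hf0 hf0) hf1', mul_nonneg (mul_nonneg hg2 hg2) hf1',
    mul_nonneg (mul_nonneg hg2 hf0) hf1', mul_nonneg hg2 hf0]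

section Comparison

variable {γ R : ℕ} {r : ℝ}

lemma integral_excess_sq_le_of_mem_comparisonBox (hγ : 2 ≤ γ) (hγR : γ < R) (hRr : (R : ℝ) ≤ r)
    (hrR : r < R + 1) {x : Fin R → ℝ} (hx : x ∈ comparisonBox γ R r (61 / 100) (37 / 100)) :
    ∫ t in 0..r, excess γ x t ^ 2 ≤ γ ^ 2 * r - (γ ^ 2 - 1) * (R - γ) :=
  (integral_excess_sq_le_integral_excess_sq_knot hx ((Nat.cast_nonneg R).trans hRr)).trans <|
    (integral_excess_sq_knot_le (by omega) hγR hRr (by norm_num) (by norm_num) (by norm_num)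
      (by norm_num)).trans (energy_budget hγ hγR hRr hrR)

lemma volume_simplex_div_volume_comparisonBox_le (hγ : 2 ≤ γ) (hγR : γ ≤ R) (hRr : (R : ℝ) ≤ r)
    (hrR : r < R + 1) :
    volume {x : Fin R → ℝ | StrictMono x ∧ ∀ i, x i ∈ Set.Ioo 0 r} /
      volume (comparisonBox γ R r (61 / 100) (37 / 100)) ≤
        ENNReal.ofReal (exp (2 * R + γ * log γ)) := by
  rw [volume_comparisonBox hγR (by norm_num) (by norm_num)]
  refine ENNReal.div_le_of_le_mul ((volume_simplex_le R ((Nat.cast_nonneg R).trans hRr)).trans ?_)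
  rw [← ENNReal.ofReal_mul (exp_pos _).le]
  refine ENNReal.ofReal_le_ofReal ((exp_le_exp.2 hrR.le).trans ?_)
  linarith [exp_le_comparisonBox_volume_mul hγ hγR]

lemma gibbsMeasure_setOf_excess_ge_le {β : ℝ} (hβ : 0 ≤ β) (hγ : 2 ≤ γ) (hγR : γ < R)
    (hRr : (R : ℝ) ≤ r) (hrR : r < R + 1) :
    gibbsMeasure volume {x : Fin R → ℝ | StrictMono x ∧ ∀ i, x i ∈ Set.Ioo 0 r} β
        (fun x => 1 / 2 * ∫ t in 0..r, excess γ x t ^ 2)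
        {x | ∀ t ∈ Set.Icc 0 r, (γ : ℝ) ≤ excess γ x t} ≤
      ENNReal.ofReal (exp (-(β / 2) * ((γ : ℝ) ^ 2 - 1) * (R - γ)) * exp (2 * R + γ * log γ)) := by
  set U := fun x : Fin R → ℝ => 1 / 2 * ∫ t in 0..r, excess γ x t ^ 2
  have hr : 0 ≤ r := (Nat.cast_nonneg R).trans hRr
  have hevent : {x | ∀ t ∈ Set.Icc 0 r, (γ : ℝ) ≤ excess γ x t} ⊆ {x | γ ^ 2 * r / 2 ≤ U x} :=
    fun x hx => by
      simp only [U, Set.mem_ofPred_eq] at hx ⊢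
      linarith [sq_mul_le_integral_excess_sq (Nat.cast_nonneg γ) hr hx]
  have hbox (x) (hx : x ∈ comparisonBox γ R r (61 / 100) (37 / 100)) :
      U x ≤ (γ ^ 2 * r - (γ ^ 2 - 1) * (R - γ)) / 2 := by
    simp only [U]
    linarith [integral_excess_sq_le_of_mem_comparisonBox hγ hγR hRr hrR hx]
  refine (measure_mono hevent).trans <| (gibbsMeasure_setOf_le_le volume _ hβ
    ((measurable_integral_excess_sq _ _ _).const_mul _)
    (MeasurableSet.univ_pi fun _ => measurableSet_Ioo)
    (comparisonBox_subset (by omega) hγR hRr (by norm_num) (by norm_num) (by norm_num)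
      (by norm_num)) hbox).trans ?_
  rw [ENNReal.ofReal_mul (exp_pos _).le]
  refine mul_le_mul' (le_of_eq ?_) (volume_simplex_div_volume_comparisonBox_le hγ hγR.le hRr hrR)
  congr 2
  ring

end Comparison

end Jellium

open Jellium

/-- Lemma 6.1: for the 1D jellium of `R = ⌊r⌋` particles in `[0,r]` with an external
charge `γ` affixed at `0` and `-(γ + {r})` affixed at `r`, the Gibbs probability that
`K(t) ≥ γ` for every `t ∈ [0,r]` is at most
`exp(-(β/2)(γ²-1)(R-γ)) · exp(2R + γ ln γ)`. -/
theorem oneD_min_imbalance_bound (β r : ℝ) (hβ : 0 < β) (hr : 0 < r)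
    (γ : ℕ) (hγ : 0 < γ) (hγr : (γ : ℝ) < r) :
    let R : ℕ := ⌊r⌋₊
    let Δ : Set (Fin R → ℝ) := {x | StrictMono x ∧ ∀ i, x i ∈ Set.Ioo 0 r}
    let K : ℝ → (Fin R → ℝ) → ℝ := fun t x =>
      (γ : ℝ) + t - (Nat.card {i : Fin R // x i ≤ t} : ℝ)
    let U : (Fin R → ℝ) → ℝ := fun x => (1 / 2) * ∫ t in (0:ℝ)..r, (K t x) ^ 2
    let Z : ℝ≥0∞ := ∫⁻ x in Δ, ENNReal.ofReal (Real.exp (-β * U x))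
    let P : Measure (Fin R → ℝ) :=
      Z⁻¹ • ((volume.restrict Δ).withDensity fun x => ENNReal.ofReal (Real.exp (-β * U x)))
    P {x | ∀ t ∈ Set.Icc (0:ℝ) r, (γ : ℝ) ≤ K t x} ≤
      ENNReal.ofReal
        (Real.exp (-(β / 2) * ((γ : ℝ) ^ 2 - 1) * ((R : ℝ) - (γ : ℝ))) *
          Real.exp (2 * (R : ℝ) + (γ : ℝ) * Real.log (γ : ℝ))) := by
  intro R Δ K U Z P
  have hK : K = fun t x => excess γ x t := by
    funext t x
    simp only [K, excess, Nat.card_eq_fintype_card, Fintype.card_subtype]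
  have hU : U = fun x => 1 / 2 * ∫ t in (0:ℝ)..r, excess γ x t ^ 2 := by simp only [U, hK]
  change gibbsMeasure volume Δ β U _ ≤ _
  have hγR : γ ≤ R := Nat.le_floor hγr.le
  by_cases htriv : γ = 1 ∨ R = γ
  · have hgap : -(β / 2) * ((γ : ℝ) ^ 2 - 1) * ((R : ℝ) - γ) = 0 := by
      rcases htriv with h | h <;> simp [h]
    rw [hgap, exp_zero, one_mul]
    refine (gibbsMeasure_le_one volume Δ _).trans (ENNReal.one_le_ofReal.2 (one_le_exp ?_))
    have := log_natCast_nonneg γ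
    positivity
  rw [hU, hK]
  exact gibbsMeasure_setOf_excess_ge_le hβ.le (by omega) (by omega) (Nat.floor_le hr.le)
    (Nat.lt_floor_add_one r)
end

section
/- Energy gap between high-imbalance and relaxed configurations (equation (6.12)): Let γ ∈ ℕ with 1 ≤ γ ≤ R. Let Δ⁺ be the set of configurations x ∈ Δ(R,[0,r]) with K(t;x) ≥ γ for all t ∈ [0,r], and let Δ⁻ be the set of configurations with exactly γ+1 particles in [0,1], exactly one particle in each interval (k−1,k) for 2 ≤ k ≤ R−γ, and no particles in [R−γ, r]. Then for every x⁺ ∈ Δ⁺ and every x⁻ ∈ Δ⁻: ∫_0^r K(t;x⁺)² dt − ∫_0^r K(t;x⁻)² dt ≥ (R−γ)(γ²−1). -/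
open Real MeasureTheory

lemma energy_gap_sq_integrable (c : ℝ) (N : ℝ → ℕ) (hN : Monotone fun t => (N t : ℝ))
    (M : ℕ) (hM : ∀ t, N t ≤ M) (a b : ℝ) :
    IntervalIntegrable (fun t => (c + t - (N t : ℝ)) ^ 2) volume a b := by
  have hmeas : Measurable fun t => (c + t - (N t : ℝ)) ^ 2 :=
    ((measurable_const.add measurable_id).sub hN.measurable).pow_const 2
  rw [intervalIntegrable_iff]
  have hfin : volume (Set.uIoc a b) ≠ ⊤ := by
    rw [Set.uIoc]; exact measure_Ioc_lt_top.ne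
  refine Measure.integrableOn_of_bounded (M := (|c| + |a| + |b| + M) ^ 2) hfin
    hmeas.aestronglyMeasurable ?_
  refine (ae_restrict_iff' measurableSet_uIoc).2 (Filter.Eventually.of_forall fun t ht => ?_)
  rw [Set.mem_uIoc] at ht
  have h1 : t ≤ |a| + |b| := by
    rcases ht with ⟨_, h⟩ | ⟨_, h⟩ <;>
      [exact h.trans (by linarith [le_abs_self b, abs_nonneg a]);
       exact h.trans (by linarith [le_abs_self a, abs_nonneg b])]
  have h2 : -(|a| + |b|) ≤ t := by
    rcases ht with ⟨h, _⟩ | ⟨h, _⟩ <;>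
      [exact le_trans (by linarith [neg_abs_le a, abs_nonneg b]) h.le;
       exact le_trans (by linarith [neg_abs_le b, abs_nonneg a]) h.le]
  have h3 : (0:ℝ) ≤ N t := Nat.cast_nonneg _
  have h4 : (N t : ℝ) ≤ M := Nat.cast_le.2 (hM t)
  have hca : (0:ℝ) ≤ |c| := abs_nonneg c
  have hcb : -|c| ≤ c := neg_abs_le c
  have hcc : c ≤ |c| := le_abs_self c
  rw [Real.norm_eq_abs, abs_pow, sq_abs]
  nlinarith [sq_nonneg (c + t - (N t : ℝ)), Nat.cast_nonneg (α := ℝ) M]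

set_option maxHeartbeats 4000000 in
/-- Energy gap between high-imbalance and relaxed configurations (equation (6.12)):
with `R = ⌊r⌋` and `1 ≤ γ ≤ R`, if `x⁺` is any configuration with `K(t;x⁺) ≥ γ` on
`[0,r]` and `x⁻` any configuration with exactly `γ+1` particles in `[0,1]`, exactly one
particle in each `(k-1,k)` for `2 ≤ k ≤ R-γ`, and no particles in `[R-γ, r]`, then
`∫_0^r K(t;x⁺)² dt - ∫_0^r K(t;x⁻)² dt ≥ (R-γ)(γ²-1)`. -/
theorem energy_gap (r : ℝ) (hr : 0 < r) (γ : ℕ) (hγ1 : 1 ≤ γ) (hγR : γ ≤ ⌊r⌋₊)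
    (K : ℝ → (Fin ⌊r⌋₊ → ℝ) → ℝ)
    (hK : ∀ t x, K t x = (γ : ℝ) + t - (Nat.card {i : Fin ⌊r⌋₊ // x i ≤ t} : ℝ))
    (xp xm : Fin ⌊r⌋₊ → ℝ)
    (hxp : StrictMono xp) (hxp' : ∀ i, xp i ∈ Set.Ioo 0 r)
    (hxm : StrictMono xm) (hxm' : ∀ i, xm i ∈ Set.Ioo 0 r)
    (hplus : ∀ t ∈ Set.Icc (0:ℝ) r, (γ : ℝ) ≤ K t xp)
    (hminus1 : Nat.card {i : Fin ⌊r⌋₊ // xm i ∈ Set.Icc (0:ℝ) 1} = γ + 1)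
    (hminus2 : ∀ k : ℕ, 2 ≤ k → k ≤ ⌊r⌋₊ - γ →
      Nat.card {i : Fin ⌊r⌋₊ // xm i ∈ Set.Ioo ((k : ℝ) - 1) (k : ℝ)} = 1)
    (hminus3 : Nat.card {i : Fin ⌊r⌋₊ // xm i ∈ Set.Icc ((⌊r⌋₊ : ℝ) - (γ : ℝ)) r} = 0) :
    ((⌊r⌋₊ : ℝ) - (γ : ℝ)) * ((γ : ℝ) ^ 2 - 1) ≤
      (∫ t in (0:ℝ)..r, (K t xp) ^ 2) - ∫ t in (0:ℝ)..r, (K t xm) ^ 2 := by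
  classical
  have hRr0 : ((⌊r⌋₊ : ℕ) : ℝ) ≤ r := Nat.floor_le hr.le
  have hrR0 : r < ((⌊r⌋₊ : ℕ) : ℝ) + 1 := Nat.lt_floor_add_one r
  revert hγR hRr0 hrR0 hK hxp hxp' hxm hxm' hplus hminus1 hminus2 hminus3
  revert K xp xm
  generalize ⌊r⌋₊ = R
  intro K xp xm hγR hK hxp hxp2 hxm hxm2 hplus hminus1 hminus2 hminus3 hRr hrR
  have hcard : ∀ (p : Fin R → Prop) (_inst : DecidablePred p),
      Nat.card {i // p i} = (Finset.univ.filter p).card := by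
    intro p inst
    rw [Nat.card_eq_fintype_card]
    convert Fintype.card_subtype p
  -- basic real facts
  have hγ1' : (1:ℝ) ≤ γ := by exact_mod_cast hγ1
  -- counting functions
  obtain ⟨Np, hNpdef⟩ : ∃ f : ℝ → ℕ, f = fun t => (Finset.univ.filter fun i => xp i ≤ t).card :=
    ⟨_, rfl⟩
  obtain ⟨Nm, hNmdef⟩ : ∃ f : ℝ → ℕ, f = fun t => (Finset.univ.filter fun i => xm i ≤ t).card :=
    ⟨_, rfl⟩
  have hKp : ∀ t, K t xp = (γ : ℝ) + t - Np t := fun t => by rw [hK, hcard _ _, hNpdef]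
  have hKm : ∀ t, K t xm = (γ : ℝ) + t - Nm t := fun t => by rw [hK, hcard _ _, hNmdef]
  have hNpmono : Monotone fun t => ((Np t : ℕ) : ℝ) := by
    intro s t hst
    show ((Np s : ℕ) : ℝ) ≤ ((Np t : ℕ) : ℝ)
    rw [hNpdef]
    have : (Finset.univ.filter fun i => xp i ≤ s) ⊆ (Finset.univ.filter fun i => xp i ≤ t) := by
      intro i hi; simp only [Finset.mem_filter] at hi ⊢; exact ⟨hi.1, hi.2.trans hst⟩
    exact_mod_cast Finset.card_le_card this
  have hNmmono : Monotone fun t => ((Nm t : ℕ) : ℝ) := by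
    intro s t hst
    show ((Nm s : ℕ) : ℝ) ≤ ((Nm t : ℕ) : ℝ)
    rw [hNmdef]
    have : (Finset.univ.filter fun i => xm i ≤ s) ⊆ (Finset.univ.filter fun i => xm i ≤ t) := by
      intro i hi; simp only [Finset.mem_filter] at hi ⊢; exact ⟨hi.1, hi.2.trans hst⟩
    exact_mod_cast Finset.card_le_card this
  have hNple : ∀ t, Np t ≤ R := fun t => by
    rw [hNpdef]; exact le_trans (Finset.card_filter_le _ _) (by simp)
  have hNmle : ∀ t, Nm t ≤ R := fun t => by
    rw [hNmdef]; exact le_trans (Finset.card_filter_le _ _) (by simp)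
  -- structure finsets for xm
  obtain ⟨Afin, hAdef⟩ : ∃ s : Finset (Fin R),
      s = Finset.univ.filter (fun i => xm i ∈ Set.Icc (0:ℝ) 1) := ⟨_, rfl⟩
  obtain ⟨Bfin, hBdef⟩ : ∃ s : ℕ → Finset (Fin R),
      s = fun k : ℕ => Finset.univ.filter (fun i => xm i ∈ Set.Ioo ((k : ℝ) - 1) (k : ℝ)) :=
    ⟨_, rfl⟩
  have hA : Afin.card = γ + 1 := by rw [hAdef]; exact ((hcard _ _).symm.trans hminus1)
  have hCempty : ∀ i, xm i < (R : ℝ) - γ := by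
    intro i
    by_contra h
    push_neg at h
    have hi : i ∈ Finset.univ.filter (fun j => xm j ∈ Set.Icc ((R : ℝ) - γ) r) := by
      simp only [Finset.mem_filter, Finset.mem_univ, Set.mem_Icc, true_and]
      exact ⟨h, (hxm2 i).2.le⟩
    have h0 : (Finset.univ.filter (fun j => xm j ∈ Set.Icc ((R : ℝ) - γ) r)).card = 0 :=
      (hcard _ _).symm.trans hminus3
    rw [Finset.card_eq_zero] at h0
    rw [h0] at hi
    exact absurd hi (Finset.notMem_empty i)
  -- γ < R
  have hγltR : γ < R := by
    rcases lt_or_eq_of_le hγR with h | h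
    · exact h
    · exfalso
      have hR1 : 1 ≤ R := le_trans hγ1 hγR
      have i0 : Fin R := ⟨0, hR1⟩
      have := hCempty i0
      rw [← h] at this
      simp at this
      exact absurd (hxm2 i0).1 (not_lt.2 this.le)
  obtain ⟨Rγ, hRγdef⟩ : ∃ n : ℕ, n = R - γ := ⟨_, rfl⟩
  have hRγcast : (Rγ : ℝ) = (R : ℝ) - γ := by
    rw [hRγdef]; push_cast [Nat.cast_sub hγR]; ring
  have hRγ1 : 1 ≤ Rγ := by omega
  have hRγ1' : (1:ℝ) ≤ (Rγ : ℝ) := by exact_mod_cast hRγ1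
  have hRγleR : (Rγ : ℝ) ≤ (R : ℝ) := by
    rw [hRγcast]; linarith [Nat.cast_nonneg (α := ℝ) γ]
  have hB : ∀ k : ℕ, 2 ≤ k → k ≤ Rγ → (Bfin k).card = 1 := by
    intro k h2 h3; rw [hRγdef] at h3; rw [hBdef]; exact ((hcard _ _).symm.trans (hminus2 k h2 h3))
  -- counting facts for xm
  have hNm_le_t1 : ∀ t : ℝ, t ≤ 1 → Nm t ≤ γ + 1 := by
    intro t ht
    have hsub : (Finset.univ.filter fun i => xm i ≤ t) ⊆ Afin := by
      intro i hi
      simp only [Finset.mem_filter, Finset.mem_univ, true_and] at hi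
      rw [hAdef]
      simp only [Finset.mem_filter, Finset.mem_univ, true_and, Set.mem_Icc]
      exact ⟨(hxm2 i).1.le, hi.trans ht⟩
    rw [hNmdef]
    calc (Finset.univ.filter fun i => xm i ≤ t).card ≤ Afin.card := Finset.card_le_card hsub
      _ = γ + 1 := hA
  have hNm1 : Nm 1 = γ + 1 := by
    have he : (Finset.univ.filter fun i => xm i ≤ (1:ℝ)) = Afin := by
      rw [hAdef]
      apply Finset.filter_congr
      intro i _
      simp only [Set.mem_Icc]
      exact ⟨fun h => ⟨(hxm2 i).1.le, h⟩, fun h => h.2⟩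
    rw [hNmdef]
    calc (Finset.univ.filter fun i => xm i ≤ (1:ℝ)).card = Afin.card := by rw [← he]
      _ = γ + 1 := hA
  have hNm_top : ∀ t : ℝ, (Rγ : ℝ) ≤ t → Nm t = R := by
    intro t ht
    have he : (Finset.univ.filter fun i => xm i ≤ t) = Finset.univ := by
      apply Finset.filter_true_of_mem
      intro i _
      have := hCempty i
      rw [← hRγcast] at this
      linarith
    rw [hNmdef]
    calc (Finset.univ.filter fun i => xm i ≤ t).card = (Finset.univ : Finset (Fin R)).card := by
          rw [he]
      _ = R := by simp
  have hBdisj : ∀ j j' : ℕ, j < j' → Disjoint (Bfin j) (Bfin j') := by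
    intro j j' hjj
    rw [Finset.disjoint_left]
    intro i hij hij'
    rw [hBdef] at hij hij'
    simp only [Finset.mem_filter, Finset.mem_univ, true_and, Set.mem_Ioo] at hij hij'
    have : (j:ℝ) + 1 ≤ (j':ℝ) := by exact_mod_cast hjj
    linarith [hij.2, hij'.1]
  have hNm_mid : ∀ t : ℝ, 1 ≤ t → t ≤ (Rγ : ℝ) →
      (γ:ℝ) + t - 1 ≤ (Nm t : ℝ) ∧ (Nm t : ℝ) ≤ (γ:ℝ) + t + 1 := by
    intro t ht1 hta
    obtain ⟨k, hkdef⟩ : ∃ n : ℕ, n = ⌊t⌋₊ := ⟨_, rfl⟩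
    have hk1 : 1 ≤ k := hkdef ▸ Nat.le_floor (by exact_mod_cast ht1)
    have hkt : (k:ℝ) ≤ t := hkdef ▸ Nat.floor_le (by linarith)
    have htk : t < (k:ℝ) + 1 := hkdef ▸ Nat.lt_floor_add_one t
    have hkR : k ≤ Rγ := by
      have : (k:ℝ) ≤ (Rγ:ℝ) := le_trans hkt hta
      exact_mod_cast this
    constructor
    · have hsub : Afin ∪ (Finset.Icc 2 k).biUnion Bfin ⊆
          Finset.univ.filter (fun i => xm i ≤ t) := by
        intro i hi
        simp only [Finset.mem_union, Finset.mem_biUnion] at hi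
        simp only [Finset.mem_filter, Finset.mem_univ, true_and]
        rcases hi with hi | ⟨j, hj, hij⟩
        · rw [hAdef] at hi
          simp only [Finset.mem_filter, Finset.mem_univ, true_and, Set.mem_Icc] at hi
          linarith [hi.2]
        · rw [hBdef] at hij
          simp only [Finset.mem_filter, Finset.mem_univ, true_and, Set.mem_Ioo] at hij
          rw [Finset.mem_Icc] at hj
          have : (j:ℝ) ≤ (k:ℝ) := by exact_mod_cast hj.2
          linarith [hij.2]
      have hdisj : Disjoint Afin ((Finset.Icc 2 k).biUnion Bfin) := by
        rw [Finset.disjoint_left]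
        intro i hiA hiB
        rw [hAdef] at hiA
        simp only [Finset.mem_filter, Finset.mem_univ, true_and, Set.mem_Icc] at hiA
        simp only [Finset.mem_biUnion] at hiB
        obtain ⟨j, hj, hij⟩ := hiB
        rw [hBdef] at hij
        simp only [Finset.mem_filter, Finset.mem_univ, true_and, Set.mem_Ioo] at hij
        rw [Finset.mem_Icc] at hj
        have h2j : (2:ℝ) ≤ (j:ℝ) := by exact_mod_cast hj.1
        linarith [hiA.2, hij.1]
      have hcardB : ((Finset.Icc 2 k).biUnion Bfin).card = (Finset.Icc 2 k).card := by
        rw [Finset.card_biUnion]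
        · rw [Finset.sum_congr rfl (fun j hj => hB j (Finset.mem_Icc.1 hj).1
            (le_trans (Finset.mem_Icc.1 hj).2 hkR)), Finset.sum_const, smul_eq_mul, mul_one]
        · intro j hj j' hj' hne
          rcases hne.lt_or_gt with h | h
          · exact hBdisj j j' h
          · exact (hBdisj j' j h).symm
      have hcount : γ + 1 + (Finset.Icc 2 k).card ≤ Nm t := by
        calc γ + 1 + (Finset.Icc 2 k).card
            = (Afin ∪ (Finset.Icc 2 k).biUnion Bfin).card := by
              rw [Finset.card_union_of_disjoint hdisj, hA, hcardB]
          _ ≤ Nm t := by rw [hNmdef]; exact Finset.card_le_card hsub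
      have hicc : (Finset.Icc 2 k).card = k - 1 := by rw [Nat.card_Icc]; omega
      have hnat : γ + k ≤ Nm t := by omega
      have h' : (γ:ℝ) + (k:ℝ) ≤ (Nm t : ℝ) := by exact_mod_cast hnat
      linarith
    · have hsum : Nm t + (Finset.univ.filter (fun i => ¬ xm i ≤ t)).card = R := by
        rw [hNmdef]
        simpa using Finset.card_filter_add_card_filter_not
          (s := (Finset.univ : Finset (Fin R))) (p := fun i => xm i ≤ t)
      have hsubT : (Finset.Icc (k+2) Rγ).biUnion Bfin ⊆
          Finset.univ.filter (fun i => ¬ xm i ≤ t) := by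
        intro i hi
        simp only [Finset.mem_biUnion] at hi
        obtain ⟨j, hj, hij⟩ := hi
        rw [hBdef] at hij
        simp only [Finset.mem_filter, Finset.mem_univ, true_and, Set.mem_Ioo] at hij
        rw [Finset.mem_Icc] at hj
        simp only [Finset.mem_filter, Finset.mem_univ, true_and, not_le]
        have : ((k:ℕ):ℝ) + 2 ≤ (j:ℝ) := by exact_mod_cast hj.1
        linarith [hij.1]
      have hcardT : ((Finset.Icc (k+2) Rγ).biUnion Bfin).card = (Finset.Icc (k+2) Rγ).card := by
        rw [Finset.card_biUnion]
        · rw [Finset.sum_congr rfl (fun j hj => hB j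
            (by have := (Finset.mem_Icc.1 hj).1; omega) (Finset.mem_Icc.1 hj).2),
            Finset.sum_const, smul_eq_mul, mul_one]
        · intro j hj j' hj' hne
          rcases hne.lt_or_gt with h | h
          · exact hBdisj j j' h
          · exact (hBdisj j' j h).symm
      have hT : (Finset.Icc (k+2) Rγ).card ≤ (Finset.univ.filter (fun i => ¬ xm i ≤ t)).card := by
        rw [← hcardT]; exact Finset.card_le_card hsubT
      have hiccT : (Finset.Icc (k+2) Rγ).card = Rγ + 1 - (k+2) := by rw [Nat.card_Icc]
      have hnat : Nm t ≤ γ + k + 1 := by omega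
      have h' : (Nm t : ℝ) ≤ (γ:ℝ) + (k:ℝ) + 1 := by exact_mod_cast hnat
      linarith
  -- Np vanishes on [0,1)
  have hR1' : (1:ℝ) ≤ (R:ℝ) := by exact_mod_cast le_trans hγ1 hγR
  have hplus' : ∀ t ∈ Set.Icc (0:ℝ) r, (γ:ℝ) ≤ (γ:ℝ) + t - (Np t : ℝ) := by
    intro t ht
    rw [← hKp]
    exact hplus t ht
  have hNp0 : ∀ t : ℝ, 0 ≤ t → t < 1 → Np t = 0 := by
    intro t ht0 ht1
    have h := hplus' t ⟨ht0, by linarith⟩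
    have h2 : (Np t : ℝ) < 1 := by linarith
    have h3 : Np t < 1 := by exact_mod_cast h2
    omega
  -- integrability
  have hint_p : ∀ a b : ℝ, IntervalIntegrable (fun t => ((γ:ℝ) + t - (Np t : ℝ))^2) volume a b :=
    fun a b => energy_gap_sq_integrable (γ:ℝ) Np hNpmono R hNple a b
  have hint_m : ∀ a b : ℝ, IntervalIntegrable (fun t => ((γ:ℝ) + t - (Nm t : ℝ))^2) volume a b :=
    fun a b => energy_gap_sq_integrable (γ:ℝ) Nm hNmmono R hNmle a b
  -- rewrite the goal
  simp only [hKp, hKm]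
  -- piece 1 : [0,1]
  have hB1 : (∫ t in (0:ℝ)..1, ((γ:ℝ) + t - (Nm t : ℝ))^2)
      ≤ ∫ t in (0:ℝ)..1, ((γ:ℝ) + t - (Np t : ℝ))^2 := by
    apply intervalIntegral.integral_mono_on (by norm_num) (hint_m 0 1) (hint_p 0 1)
    intro t ht
    obtain ⟨ht0, ht1⟩ := ht
    rcases eq_or_lt_of_le ht1 with h1 | h1
    · subst h1
      have e : ((γ:ℝ) + 1 - (Nm (1:ℝ) : ℝ))^2 = 0 := by
        rw [hNm1]; push_cast; ring
      rw [e]; positivity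
    · have hNp' : Np t = 0 := hNp0 t ht0 h1
      have hNmub : (Nm t : ℝ) ≤ (γ:ℝ) + 1 := by exact_mod_cast hNm_le_t1 t ht1
      have hNm0 : (0:ℝ) ≤ (Nm t : ℝ) := Nat.cast_nonneg _
      rw [hNp']
      push_cast
      nlinarith
  -- piece 2 : [1, R-γ]
  have hB2p : (γ:ℝ)^2 * ((Rγ:ℝ) - 1) ≤ ∫ t in (1:ℝ)..(Rγ:ℝ), ((γ:ℝ) + t - (Np t : ℝ))^2 := by
    have h := intervalIntegral.integral_mono_on (μ := volume) hRγ1'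
      (intervalIntegrable_const (c := (γ:ℝ)^2)) (hint_p 1 (Rγ:ℝ)) ?_
    · rw [intervalIntegral.integral_const, smul_eq_mul, mul_comm] at h
      exact h
    · intro t ht
      have h2 := hplus' t ⟨by linarith [ht.1], by linarith [ht.2, hRγleR, hRr]⟩
      nlinarith [hγ1']
  have hB2m : (∫ t in (1:ℝ)..(Rγ:ℝ), ((γ:ℝ) + t - (Nm t : ℝ))^2) ≤ (Rγ:ℝ) - 1 := by
    have h := intervalIntegral.integral_mono_on (μ := volume) hRγ1'
      (hint_m 1 (Rγ:ℝ)) (intervalIntegrable_const (c := (1:ℝ))) ?_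
    · rw [intervalIntegral.integral_const, smul_eq_mul, mul_one] at h
      exact h
    · intro t ht
      obtain ⟨hlb, hub⟩ := hNm_mid t ht.1 ht.2
      nlinarith
  -- piece 3 : [R-γ, R]
  have hB3p : (γ:ℝ)^2 * (γ:ℝ) ≤ ∫ t in ((Rγ:ℝ))..(R:ℝ), ((γ:ℝ) + t - (Np t : ℝ))^2 := by
    have h := intervalIntegral.integral_mono_on (μ := volume) hRγleR
      (intervalIntegrable_const (c := (γ:ℝ)^2)) (hint_p (Rγ:ℝ) (R:ℝ)) ?_
    · rw [intervalIntegral.integral_const, smul_eq_mul, mul_comm] at h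
      have e : (R:ℝ) - (Rγ:ℝ) = (γ:ℝ) := by rw [hRγcast]; ring
      rw [e] at h
      exact h
    · intro t ht
      have h2 := hplus' t ⟨by linarith [ht.1, hRγcast, Nat.cast_nonneg (α := ℝ) Rγ],
        by linarith [ht.2, hRr]⟩
      nlinarith [hγ1']
  have hB3m : (∫ t in ((Rγ:ℝ))..(R:ℝ), ((γ:ℝ) + t - (Nm t : ℝ))^2) = (γ:ℝ)^3 / 3 := by
    have heq : Set.EqOn (fun t => ((γ:ℝ) + t - (Nm t : ℝ))^2)
        (fun t => (t - (Rγ:ℝ))^2) (Set.uIcc (Rγ:ℝ) (R:ℝ)) := by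
      intro t ht
      rw [Set.uIcc_of_le hRγleR] at ht
      have hNt : Nm t = R := hNm_top t ht.1
      simp only
      rw [hNt, hRγcast]
      ring
    rw [intervalIntegral.integral_congr heq,
      intervalIntegral.integral_comp_sub_right (fun u => u^2) (Rγ:ℝ), integral_pow]
    have e1 : (Rγ:ℝ) - (Rγ:ℝ) = 0 := by ring
    have e2 : (R:ℝ) - (Rγ:ℝ) = (γ:ℝ) := by rw [hRγcast]; ring
    rw [e1, e2]
    norm_num
  -- piece 4 : [R, r]
  have hB4 : (∫ t in ((R:ℝ))..r, ((γ:ℝ) + t - (Nm t : ℝ))^2)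
      ≤ ∫ t in ((R:ℝ))..r, ((γ:ℝ) + t - (Np t : ℝ))^2 := by
    apply intervalIntegral.integral_mono_on hRr (hint_m _ _) (hint_p _ _)
    intro t ht
    have hNmt : Nm t = R := hNm_top t (le_trans hRγleR ht.1)
    have hNpt : (Np t : ℝ) ≤ (R:ℝ) := by exact_mod_cast hNple t
    rw [hNmt]
    nlinarith [ht.1, hγ1']
  -- splitting
  have e1p := intervalIntegral.integral_add_adjacent_intervals (hint_p 0 1) (hint_p 1 (Rγ:ℝ))
  have e2p := intervalIntegral.integral_add_adjacent_intervals (hint_p 0 (Rγ:ℝ)) (hint_p (Rγ:ℝ) (R:ℝ))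
  have e3p := intervalIntegral.integral_add_adjacent_intervals (hint_p 0 (R:ℝ)) (hint_p (R:ℝ) r)
  have e1m := intervalIntegral.integral_add_adjacent_intervals (hint_m 0 1) (hint_m 1 (Rγ:ℝ))
  have e2m := intervalIntegral.integral_add_adjacent_intervals (hint_m 0 (Rγ:ℝ)) (hint_m (Rγ:ℝ) (R:ℝ))
  have e3m := intervalIntegral.integral_add_adjacent_intervals (hint_m 0 (R:ℝ)) (hint_m (R:ℝ) r)
  -- final arithmetic
  have haux : 3*(γ:ℝ)^2 ≤ 2*(γ:ℝ)^3 + 3 := by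
    nlinarith [sq_nonneg ((γ:ℝ) - 1), mul_nonneg (le_trans zero_le_one hγ1') (sq_nonneg ((γ:ℝ) - 1))]
  rw [show ((R:ℝ) - (γ:ℝ)) = (Rγ:ℝ) from hRγcast.symm]
  nlinarith [hB1, hB2p, hB2m, hB3p, hB3m, hB4, e1p, e2p, e3p, e1m, e2m, e3m, haux]
end

section
/- Improved energy bound (Lemma 6.5): If K(t) > γ for all t ∈ (−ℓ, r), then n₋ℓ = 0 and ∫_{−ℓ}^r K(t)² dt ≥ γ²(ℓ + r) + Σ_{k=−ℓ}^{R} (γ·n_k² + n_k³/3). -/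
open Real MeasureTheory

lemma tele_sum (g : ℕ → ℝ → ℝ) (a : ℕ → ℝ) (n : ℕ) :
    ∑ i ∈ Finset.range (n+1), (g i (a (i+1)) - g i (a i)) =
      g n (a (n+1)) - g 0 (a 0) +
        ∑ m ∈ Finset.range n, (g m (a (m+1)) - g (m+1) (a (m+1))) := by
  induction n with
  | zero => simp
  | succ n ih =>
    rw [Finset.sum_range_succ, ih, Finset.sum_range_succ]
    ring

lemma integral_sq_shift (c p q : ℝ) :
    ∫ t in p..q, (t + c)^2 = ((q+c)^3 - (p+c)^3)/3 := by
  have h := intervalIntegral.integral_comp_add_right (a := p) (b := q) (fun t => t^2) c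
  rw [h, integral_pow]
  norm_num

lemma psi_sum (g : ℝ) (n : ℕ) :
    ∑ j ∈ Finset.range n, ((g + j + 1)^3 - (g + j)^3)/3
      = n*g^2 + g*(n:ℝ)^2 + (n:ℝ)^3/3 := by
  induction n with
  | zero => simp
  | succ n ih =>
    rw [Finset.sum_range_succ, ih]
    push_cast
    ring

lemma psi_mono (g a b : ℝ) (hg : 0 ≤ g) (hb : 0 ≤ b) (hab : b ≤ a) :
    ((g + b + 1)^3 - (g + b)^3)/3 ≤ ((g + a + 1)^3 - (g + a)^3)/3 := by
  nlinarith [mul_nonneg (mul_nonneg hg hb) (sub_nonneg.2 hab), mul_nonneg hb (sub_nonneg.2 hab), mul_nonneg hg (sub_nonneg.2 hab), sq_nonneg (a-b), sq_nonneg (a+b), mul_nonneg (sub_nonneg.2 hab) (sub_nonneg.2 hab)]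


/-- Improved energy bound (Lemma 6.5): with an external charge `γ` at `-ℓ`, unit
background density and particles `-ℓ < x₁ < ⋯ < x_M < r`, if `K(t) > γ` for all
`t ∈ (-ℓ, r)` then `n₋ℓ = 0` and
`∫_{-ℓ}^r K(t)² dt ≥ γ²(ℓ+r) + Σ_{k=-ℓ}^{R} (γ n_k² + n_k³/3)`, where `R = ⌊r⌋`,
`n_k` is the number of particles in `[k,k+1)` for `k ≤ R-1` and in `[R,r)` for `k = R`. -/
theorem improved_energy_bound (γ ℓ : ℕ) (r : ℝ) (hr : 0 < r)
    (M : ℕ) (x : Fin M → ℝ) (hx : StrictMono x)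
    (hlb : ∀ j, -(ℓ : ℝ) < x j) (hub : ∀ j, x j < r)
    (K : ℝ → ℝ)
    (hK : ∀ t, K t = (γ : ℝ) + (t + (ℓ : ℝ)) - (Nat.card {j : Fin M // x j ≤ t} : ℝ))
    (n : ℤ → ℕ)
    (hn : ∀ k : ℤ, k < ⌊r⌋ → n k = Nat.card {j : Fin M // x j ∈ Set.Ico (k : ℝ) ((k : ℝ) + 1)})
    (hnR : n ⌊r⌋ = Nat.card {j : Fin M // x j ∈ Set.Ico ((⌊r⌋ : ℝ)) r})
    (hbig : ∀ t ∈ Set.Ioo (-(ℓ : ℝ)) r, (γ : ℝ) < K t) :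
    n (-(ℓ : ℤ)) = 0 ∧
      (γ : ℝ) ^ 2 * ((ℓ : ℝ) + r) +
          ∑ k ∈ Finset.Icc (-(ℓ : ℤ)) ⌊r⌋,
            ((γ : ℝ) * (n k : ℝ) ^ 2 + (n k : ℝ) ^ 3 / 3) ≤
        ∫ t in (-(ℓ : ℝ))..r, (K t) ^ 2 := by
  classical
  set X : ℕ → ℝ := fun m => if h : m < M then x ⟨m, h⟩ else r + 1 + m with hXdef
  have hXval : ∀ (m : ℕ) (h : m < M), X m = x ⟨m, h⟩ := fun m h => dif_pos h
  have hXlt : ∀ {m m' : ℕ}, m < m' → m' < M → X m < X m' := by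
    intro m m' h h'
    rw [hXval m (h.trans h'), hXval m' h']
    exact hx h
  have hXle : ∀ {m m' : ℕ}, m ≤ m' → m' < M → X m ≤ X m' := by
    intro m m' h h'
    rcases eq_or_lt_of_le h with rfl | h2
    · exact le_rfl
    · exact (hXlt h2 h').le
  have hXub : ∀ m, m < M → X m < r := by
    intro m h; rw [hXval m h]; exact hub _
  have hXlb : ∀ m, m < M → -(ℓ:ℝ) < X m := by
    intro m h; rw [hXval m h]; exact hlb _
  set NN : ℝ → ℕ := fun t => ((Finset.range M).filter (fun m => X m ≤ t)).card with hNNdef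
  have hcard : ∀ (q : ℝ → Prop) (_ : DecidablePred q),
      (Nat.card {j : Fin M // q (x j)}) = ((Finset.range M).filter (fun m => q (X m))).card := by
    intro q hq
    rw [Nat.card_eq_fintype_card, Fintype.card_subtype]
    apply Finset.card_bij (fun (j : Fin M) _ => (j : ℕ))
    · intro j hj
      simp only [Finset.mem_filter, Finset.mem_univ, true_and] at hj
      refine Finset.mem_filter.2 ⟨Finset.mem_range.2 j.isLt, ?_⟩
      rw [hXval j j.isLt]
      simpa using hj
    · intro j _ j' _ h; exact Fin.ext h
    · intro m hm
      simp only [Finset.mem_filter, Finset.mem_range] at hm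
      refine ⟨⟨m, hm.1⟩, Finset.mem_filter.2 ⟨Finset.mem_univ _, ?_⟩, rfl⟩
      have := hm.2
      rwa [hXval m hm.1] at this
  have hKt : ∀ t, K t = (γ:ℝ) + (t + ℓ) - NN t := by
    intro t
    rw [hK t, hcard (fun s => s ≤ t) (by infer_instance)]
  have hNN_ge : ∀ (m : ℕ), m < M → ∀ t, X m ≤ t → m + 1 ≤ NN t := by
    intro m h t ht
    have hsub : Finset.range (m+1) ⊆ (Finset.range M).filter (fun j => X j ≤ t) := by
      intro j hj
      rw [Finset.mem_range, Nat.lt_succ_iff] at hj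
      have hjM : j < M := lt_of_le_of_lt hj h
      refine Finset.mem_filter.2 ⟨Finset.mem_range.2 hjM, ?_⟩
      exact le_trans (hXle hj h) ht
    simpa using Finset.card_le_card hsub
  have hNN_le : ∀ (t : ℝ) (i : ℕ), (∀ j, j < M → X j ≤ t → j < i) → NN t ≤ i := by
    intro t i h
    have hsub : (Finset.range M).filter (fun j => X j ≤ t) ⊆ Finset.range i := by
      intro j hj
      rw [Finset.mem_filter, Finset.mem_range] at hj
      exact Finset.mem_range.2 (h j hj.1 hj.2)
    simpa using Finset.card_le_card hsub
  have hkey : ∀ m, m < M → (m:ℝ) + 1 < X m + ℓ := by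
    intro m h
    have h1 := hbig _ ⟨hXlb m h, hXub m h⟩
    rw [hKt (X m)] at h1
    have h2 : ((m:ℝ) + 1) ≤ (NN (X m) : ℝ) := by
      exact_mod_cast hNN_ge m h (X m) le_rfl
    linarith
  -- initial segments
  have hIS : ∀ (s : ℝ) (m : ℕ), m < M →
      (X m < s ↔ m < ((Finset.range M).filter (fun j => X j < s)).card) := by
    intro s m hm
    constructor
    · intro hlt
      have hsub : Finset.range (m+1) ⊆ (Finset.range M).filter (fun j => X j < s) := by
        intro j hj
        rw [Finset.mem_range, Nat.lt_succ_iff] at hj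
        refine Finset.mem_filter.2 ⟨Finset.mem_range.2 (lt_of_le_of_lt hj hm), ?_⟩
        exact lt_of_le_of_lt (hXle hj hm) hlt
      have := Finset.card_le_card hsub
      simpa using this
    · intro hlt
      by_contra hge
      push_neg at hge
      have hsub : (Finset.range M).filter (fun j => X j < s) ⊆ Finset.range m := by
        intro j hj
        rw [Finset.mem_filter, Finset.mem_range] at hj
        rw [Finset.mem_range]
        by_contra hjm
        push_neg at hjm
        have := hXle hjm hj.1
        linarith [hj.2]
      have := Finset.card_le_card hsub
      simp only [Finset.card_range] at this
      omega

  -- partition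
  set a : ℕ → ℝ := fun i => if i = 0 then -(ℓ:ℝ) else if i ≤ M then X (i-1) else r with hadef
  have ha0 : a 0 = -(ℓ:ℝ) := by simp [hadef]
  have haM : a (M+1) = r := by
    simp only [hadef]
    rw [if_neg (by omega), if_neg (by omega)]
  have haX : ∀ m, m < M → a (m+1) = X m := by
    intro m hm
    simp only [hadef]
    rw [if_neg (by omega), if_pos (by omega)]
    norm_num
  have hamono : ∀ i, i ≤ M → a i < a (i+1) := by
    intro i hi
    rcases Nat.eq_zero_or_pos i with rfl | hpos
    · rw [ha0]
      rcases Nat.eq_zero_or_pos M with rfl | hM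
      · rw [haM]
        have : (0:ℝ) ≤ (ℓ:ℝ) := Nat.cast_nonneg _
        linarith
      · rw [haX 0 hM]; exact hXlb 0 hM
    · have hi1 : i - 1 < M := by omega
      have : a i = X (i-1) := by
        have := haX (i-1) hi1
        rwa [Nat.sub_add_cancel hpos] at this
      rw [this]
      rcases eq_or_lt_of_le hi with rfl | hiM
      · rw [haM]; exact hXub _ hi1
      · rw [haX i hiM]; exact hXlt (by omega) hiM
  have hNNpiece : ∀ i, i ≤ M → ∀ t, a i ≤ t → t < a (i+1) → NN t = i := by
    intro i hi t h1 h2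
    refine le_antisymm (hNN_le t i ?_) ?_
    · intro j hj hjt
      by_contra hji
      push_neg at hji
      rcases lt_or_ge i M with hiM | hiM
      · have hXij : X i ≤ X j := hXle hji hj
        rw [haX i hiM] at h2
        linarith
      · omega
    · cases i with
      | zero => exact Nat.zero_le _
      | succ i' =>
        have hi' : i' < M := by omega
        have hXt : X i' ≤ t := by rw [← haX i' hi']; exact h1
        exact hNN_ge i' hi' t hXt
  have hKsq : ∀ i, i ≤ M → ∀ t, a i ≤ t → t < a (i+1) →
      K t ^ 2 = (t + ((γ:ℝ) + ℓ - i))^2 := by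
    intro i hi t h1 h2
    rw [hKt t, hNNpiece i hi t h1 h2]
    ring
  have hae_ne : ∀ c : ℝ, ∀ᵐ t : ℝ, t ≠ c := by
    intro c
    refine MeasureTheory.ae_iff.mpr ?_
    simp
  have hintg : ∀ i, i < M + 1 → IntervalIntegrable (fun t => K t ^ 2) volume (a i) (a (i+1)) := by
    intro i hi
    have hi' : i ≤ M := by omega
    have hcont : Continuous (fun t : ℝ => (t + ((γ:ℝ) + ℓ - i))^2) := (continuous_id.add continuous_const).pow 2
    have h2 := (hcont.intervalIntegrable (μ := volume) (a i) (a (i+1)))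
    rw [intervalIntegrable_iff] at h2 ⊢
    refine h2.congr ?_
    have h3 : ∀ᵐ t : ℝ ∂(volume.restrict (Set.uIoc (a i) (a (i+1)))), t ≠ a (i+1) :=
      (hae_ne (a (i+1))).filter_mono (MeasureTheory.ae_mono Measure.restrict_le_self)
    have h4 := MeasureTheory.ae_restrict_mem (μ := volume) (measurableSet_uIoc (a := a i) (b := a (i+1)))
    filter_upwards [h3, h4] with t ht hmem
    rw [Set.uIoc_of_le (hamono i hi').le] at hmem
    exact (hKsq i hi' t hmem.1.le (lt_of_le_of_ne hmem.2 ht)).symm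
  have haeq : ∀ i, i ≤ M → ∫ t in (a i)..(a (i+1)), K t ^ 2
      = (a (i+1) + ((γ:ℝ)+ℓ-i))^3/3 - (a i + ((γ:ℝ)+ℓ-i))^3/3 := by
    intro i hi
    have h0 : ∫ t in (a i)..(a (i+1)), K t ^ 2
        = ∫ t in (a i)..(a (i+1)), (t + ((γ:ℝ)+ℓ-i))^2 := by
      apply intervalIntegral.integral_congr_ae
      filter_upwards [hae_ne (a (i+1))] with t ht hmem
      rw [Set.uIoc_of_le (hamono i hi).le] at hmem
      exact hKsq i hi t hmem.1.le (lt_of_le_of_ne hmem.2 ht)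
    rw [h0, integral_sq_shift]
    ring
  have hint_eq : ∫ t in (-(ℓ:ℝ))..r, K t ^ 2
      = (r + ((γ:ℝ)+ℓ-M))^3/3 - (γ:ℝ)^3/3
        + ∑ m ∈ Finset.range M,
            ((X m + ((γ:ℝ)+ℓ-m))^3/3 - (X m + ((γ:ℝ)+ℓ-(m+1)))^3/3) := by
    rw [← ha0, ← haM, ← intervalIntegral.sum_integral_adjacent_intervals hintg]
    rw [Finset.sum_congr rfl (fun i hi => haeq i (by
      rw [Finset.mem_range] at hi; omega))]
    rw [tele_sum (fun i t => (t + ((γ:ℝ)+ℓ-i))^3/3) a M]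
    rw [ha0, haM]
    have hconst : (-(ℓ:ℝ) + ((γ:ℝ)+ℓ-(0:ℕ)))^3/3 = (γ:ℝ)^3/3 := by
      push_cast; ring
    rw [hconst]
    congr 1
    apply Finset.sum_congr rfl
    intro m hm
    rw [Finset.mem_range] at hm
    rw [haX m hm]
    push_cast
    ring

  -- part 1: no particles in the first interval
  have hxlow : ∀ m, m < M → 1 - (ℓ:ℝ) < X m := by
    intro m hm
    have h1 := hkey m hm
    have h2 : (0:ℝ) ≤ (m:ℝ) := Nat.cast_nonneg m
    linarith
  have hRge : -(ℓ:ℤ) ≤ ⌊r⌋ := by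
    have : (0:ℤ) ≤ ⌊r⌋ := Int.floor_nonneg.2 hr.le
    omega
  have hpart1 : n (-(ℓ:ℤ)) = 0 := by
    rcases eq_or_lt_of_le hRge with hEq | hLt
    · rw [hEq, hnR]
      have : IsEmpty {j : Fin M // x j ∈ Set.Ico ((⌊r⌋:ℝ)) r} := by
        constructor
        rintro ⟨j, hj⟩
        have h1 : x j < r := hj.2
        have h2 : r < (⌊r⌋:ℝ) + 1 := Int.lt_floor_add_one r
        have h3 : ((⌊r⌋:ℝ)) = -(ℓ:ℝ) := by
          rw [← hEq]; push_cast; ring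
        have h4 := hxlow j.val j.isLt
        rw [hXval j.val j.isLt] at h4
        simp only [Fin.eta] at h4
        rw [h3] at h2
        linarith
      exact Nat.card_of_isEmpty
    · rw [hn _ hLt]
      have : IsEmpty {j : Fin M // x j ∈ Set.Ico (((-(ℓ:ℤ)):ℤ):ℝ) ((((-(ℓ:ℤ)):ℤ):ℝ) + 1)} := by
        constructor
        rintro ⟨j, hj⟩
        have h1 : x j < (((-(ℓ:ℤ)):ℤ):ℝ) + 1 := hj.2
        have h4 := hxlow j.val j.isLt
        rw [hXval j.val j.isLt] at h4
        simp only [Fin.eta] at h4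
        push_cast at h1
        linarith
      exact Nat.card_of_isEmpty
  -- fibers
  have hγ0 : (0:ℝ) ≤ (γ:ℝ) := Nat.cast_nonneg _
  have hmaps : ∀ m ∈ Finset.range M, ⌊X m⌋ ∈ Finset.Icc (-(ℓ:ℤ)) ⌊r⌋ := by
    intro m hm
    rw [Finset.mem_range] at hm
    refine Finset.mem_Icc.2 ⟨Int.le_floor.2 (by push_cast; exact (hXlb m hm).le), ?_⟩
    exact Int.floor_le_floor (hXub m hm).le
  have hflsum : ∀ (f : ℕ → ℝ), (∑ k ∈ Finset.Icc (-(ℓ:ℤ)) ⌊r⌋,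
      ∑ m ∈ (Finset.range M).filter (fun m => ⌊X m⌋ = k), f m) = ∑ m ∈ Finset.range M, f m :=
    fun f => Finset.sum_fiberwise_of_maps_to hmaps f
  have hMcard : M = ∑ k ∈ Finset.Icc (-(ℓ:ℤ)) ⌊r⌋,
      ((Finset.range M).filter (fun m => ⌊X m⌋ = k)).card := by
    have := Finset.card_eq_sum_card_fiberwise hmaps
    simpa using this
  have hnk : ∀ k ∈ Finset.Icc (-(ℓ:ℤ)) ⌊r⌋,
      n k = ((Finset.range M).filter (fun m => ⌊X m⌋ = k)).card := by
    intro k hk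
    rw [Finset.mem_Icc] at hk
    rcases eq_or_lt_of_le hk.2 with rfl | hkR
    · rw [hnR, hcard (fun s => s ∈ Set.Ico ((⌊r⌋:ℝ)) r) (by infer_instance)]
      apply congrArg
      apply Finset.filter_congr
      intro m hm
      rw [Finset.mem_range] at hm
      simp only [Set.mem_Ico]
      constructor
      · rintro ⟨h1, h2⟩
        rw [Int.floor_eq_iff]
        exact ⟨h1, lt_of_lt_of_le h2 (Int.lt_floor_add_one r).le⟩
      · intro h
        rw [Int.floor_eq_iff] at h
        exact ⟨h.1, hXub m hm⟩
    · rw [hn k hkR, hcard (fun s => s ∈ Set.Ico ((k:ℝ)) ((k:ℝ)+1)) (by infer_instance)]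
      apply congrArg
      apply Finset.filter_congr
      intro m _
      rw [Set.mem_Ico, Int.floor_eq_iff]

  -- per-fiber lower bound
  have hfib : ∀ k ∈ Finset.Icc (-(ℓ:ℤ)) ⌊r⌋,
      ((((Finset.range M).filter (fun m => ⌊X m⌋ = k)).card : ℝ) * (γ:ℝ)^2 +
        ((γ:ℝ) * ((((Finset.range M).filter (fun m => ⌊X m⌋ = k)).card : ℝ))^2 +
          ((((Finset.range M).filter (fun m => ⌊X m⌋ = k)).card : ℝ))^3/3))
      ≤ ∑ m ∈ (Finset.range M).filter (fun m => ⌊X m⌋ = k),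
          ((X m + ((γ:ℝ)+ℓ-m))^3/3 - (X m + ((γ:ℝ)+ℓ-(m+1)))^3/3) := by
    intro k hk
    rw [Finset.mem_Icc] at hk
    set c := ((Finset.range M).filter (fun j => X j < (k:ℝ))).card with hc
    set c' := ((Finset.range M).filter (fun j => X j < (k:ℝ)+1)).card with hc'
    have hc'M : c' ≤ M := by
      calc c' ≤ (Finset.range M).card := Finset.card_filter_le _ _
      _ = M := Finset.card_range M
    have hcc' : c ≤ c' := by
      apply Finset.card_le_card
      intro j hj
      rw [Finset.mem_filter] at hj ⊢
      exact ⟨hj.1, by linarith [hj.2]⟩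
    have hfibIco : (Finset.range M).filter (fun m => ⌊X m⌋ = k) = Finset.Ico c c' := by
      ext m
      simp only [Finset.mem_filter, Finset.mem_range, Finset.mem_Ico]
      constructor
      · rintro ⟨hmM, hfl⟩
        rw [Int.floor_eq_iff] at hfl
        constructor
        · by_contra hcm
          push_neg at hcm
          have := (hIS (k:ℝ) m hmM).2 hcm
          linarith [hfl.1]
        · exact (hIS ((k:ℝ)+1) m hmM).1 hfl.2
      · rintro ⟨h1, h2⟩
        have hmM : m < M := lt_of_lt_of_le h2 hc'M
        refine ⟨hmM, ?_⟩
        rw [Int.floor_eq_iff]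
        constructor
        · by_contra hlt
          push_neg at hlt
          have := (hIS (k:ℝ) m hmM).1 hlt
          omega
        · exact (hIS ((k:ℝ)+1) m hmM).2 h2
    have hc'k : (c' : ℤ) ≤ k + ℓ := by
      rcases Nat.eq_zero_or_pos c' with h0 | hpos
      · have : (0:ℤ) ≤ k + ℓ := by
          have := hk.1
          omega
        omega
      · have hmlt : c' - 1 < M := by omega
        have h1 : X (c'-1) < (k:ℝ) + 1 := (hIS ((k:ℝ)+1) (c'-1) hmlt).2 (by omega)
        have h2 := hkey (c'-1) hmlt
        have hcast : ((c'-1:ℕ):ℝ) = (c':ℝ) - 1 := by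
          have h5 : (c' - 1) + 1 = c' := by omega
          have h6 := congrArg (Nat.cast (R := ℝ)) h5
          push_cast at h6
          linarith
        rw [hcast] at h2
        have h3 : (c':ℤ) < k + 1 + ℓ := by exact_mod_cast (by push_cast; linarith : ((c':ℤ):ℝ) < (((k + 1 + ℓ : ℤ)):ℝ))
        omega
    have hc'kR : (c' : ℝ) ≤ (k:ℝ) + (ℓ:ℝ) := by
      have : ((c':ℤ):ℝ) ≤ ((k + ℓ : ℤ):ℝ) := by exact_mod_cast hc'k
      push_cast at this
      linarith
    rw [hfibIco, Nat.card_Ico]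
    -- pointwise bound on the fiber
    have hpt : ∀ m ∈ Finset.Ico c c',
        (((γ:ℝ) + ((c'-1-m:ℕ):ℝ) + 1)^3 - ((γ:ℝ) + ((c'-1-m:ℕ):ℝ))^3)/3
          ≤ (X m + ((γ:ℝ)+ℓ-m))^3/3 - (X m + ((γ:ℝ)+ℓ-(m+1)))^3/3 := by
      intro m hm
      rw [Finset.mem_Ico] at hm
      have hmM : m < M := lt_of_lt_of_le hm.2 hc'M
      have hXmk : (k:ℝ) ≤ X m := by
        by_contra hlt
        push_neg at hlt
        have := (hIS (k:ℝ) m hmM).1 hlt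
        omega
      have hcastb : ((c'-1-m:ℕ):ℝ) = (c':ℝ) - 1 - (m:ℝ) := by
        have h5 : c'-1-m + (m+1) = c' := by omega
        have h6 := congrArg (Nat.cast (R := ℝ)) h5
        push_cast at h6
        linarith
      rw [hcastb]
      have hb : 0 ≤ (c':ℝ) - 1 - (m:ℝ) := by
        have : ((m:ℝ)) + 1 ≤ (c':ℝ) := by exact_mod_cast hm.2
        linarith
      have hab : (c':ℝ) - 1 - (m:ℝ) ≤ X m + (ℓ:ℝ) - m - 1 := by linarith
      have hmono := psi_mono (γ:ℝ) (X m + (ℓ:ℝ) - m - 1) ((c':ℝ) - 1 - (m:ℝ)) hγ0 hb hab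
      have heq : (((γ:ℝ) + (X m + (ℓ:ℝ) - m - 1) + 1)^3 - ((γ:ℝ) + (X m + (ℓ:ℝ) - m - 1))^3)/3
          = (X m + ((γ:ℝ)+ℓ-m))^3/3 - (X m + ((γ:ℝ)+ℓ-(m+1)))^3/3 := by ring
      linarith [hmono, heq ▸ hmono]
    have hsum1 : ∑ m ∈ Finset.Ico c c',
        (((γ:ℝ) + ((c'-1-m:ℕ):ℝ) + 1)^3 - ((γ:ℝ) + ((c'-1-m:ℕ):ℝ))^3)/3
        ≤ ∑ m ∈ Finset.Ico c c',
            ((X m + ((γ:ℝ)+ℓ-m))^3/3 - (X m + ((γ:ℝ)+ℓ-(m+1)))^3/3) :=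
      Finset.sum_le_sum hpt
    have hsum2 : ∑ m ∈ Finset.Ico c c',
        (((γ:ℝ) + ((c'-1-m:ℕ):ℝ) + 1)^3 - ((γ:ℝ) + ((c'-1-m:ℕ):ℝ))^3)/3
        = ∑ j ∈ Finset.range (c'-c),
            (((γ:ℝ) + (((c'-c)-1-j:ℕ):ℝ) + 1)^3 - ((γ:ℝ) + (((c'-c)-1-j:ℕ):ℝ))^3)/3 := by
      rw [Finset.sum_Ico_eq_sum_range]
      apply Finset.sum_congr rfl
      intro j _
      have : c' - 1 - (c + j) = (c' - c) - 1 - j := by omega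
      rw [this]
    have hsum3 : ∑ j ∈ Finset.range (c'-c),
        (((γ:ℝ) + (((c'-c)-1-j:ℕ):ℝ) + 1)^3 - ((γ:ℝ) + (((c'-c)-1-j:ℕ):ℝ))^3)/3
        = ∑ j ∈ Finset.range (c'-c),
            (((γ:ℝ) + (j:ℝ) + 1)^3 - ((γ:ℝ) + (j:ℝ))^3)/3 :=
      Finset.sum_range_reflect (fun j => (((γ:ℝ) + (j:ℝ) + 1)^3 - ((γ:ℝ) + (j:ℝ))^3)/3) (c'-c)
    have hsum4 := psi_sum (γ:ℝ) (c'-c)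
    have := hsum1
    rw [hsum2, hsum3, hsum4] at this
    linarith

  refine ⟨hpart1, ?_⟩
  rw [hint_eq]
  have hSbound : ∑ k ∈ Finset.Icc (-(ℓ:ℤ)) ⌊r⌋,
      ((n k : ℝ) * (γ:ℝ)^2 + ((γ:ℝ) * (n k:ℝ)^2 + (n k:ℝ)^3/3))
      ≤ ∑ m ∈ Finset.range M,
          ((X m + ((γ:ℝ)+ℓ-m))^3/3 - (X m + ((γ:ℝ)+ℓ-(m+1)))^3/3) := by
    rw [← hflsum (fun m => (X m + ((γ:ℝ)+ℓ-m))^3/3 - (X m + ((γ:ℝ)+ℓ-(m+1)))^3/3)]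
    apply Finset.sum_le_sum
    intro k hk
    rw [hnk k hk]
    exact hfib k hk
  have hMn : (M:ℝ) = ∑ k ∈ Finset.Icc (-(ℓ:ℤ)) ⌊r⌋, (n k : ℝ) := by
    have h1 : M = ∑ k ∈ Finset.Icc (-(ℓ:ℤ)) ⌊r⌋, n k := by
      rw [hMcard]
      exact Finset.sum_congr rfl (fun k hk => (hnk k hk).symm)
    rw [h1]
    push_cast
    ring
  have hsplit : ∑ k ∈ Finset.Icc (-(ℓ:ℤ)) ⌊r⌋,
      ((n k : ℝ) * (γ:ℝ)^2 + ((γ:ℝ) * (n k:ℝ)^2 + (n k:ℝ)^3/3))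
      = (∑ k ∈ Finset.Icc (-(ℓ:ℤ)) ⌊r⌋, (n k:ℝ)) * (γ:ℝ)^2
        + ∑ k ∈ Finset.Icc (-(ℓ:ℤ)) ⌊r⌋, ((γ:ℝ) * (n k:ℝ)^2 + (n k:ℝ)^3/3) := by
    rw [Finset.sum_add_distrib, Finset.sum_mul]
  have hw : 0 ≤ (ℓ:ℝ) + r - M := by
    rcases Nat.eq_zero_or_pos M with rfl | hM
    · have : (0:ℝ) ≤ (ℓ:ℝ) := Nat.cast_nonneg _
      push_cast
      linarith
    · have h1 := hkey (M-1) (by omega)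
      have h2 := hXub (M-1) (by omega)
      have h3 : (M:ℝ) ≤ ((M-1:ℕ):ℝ) + 1 := by
        have h4 : M ≤ (M-1) + 1 := by omega
        exact_mod_cast h4
      linarith
  have hA : (γ:ℝ)^2 * ((ℓ:ℝ) + r) - (γ:ℝ)^2 * M ≤ (r + ((γ:ℝ)+ℓ-M))^3/3 - (γ:ℝ)^3/3 := by
    nlinarith [hw, hγ0, mul_nonneg hγ0 (sq_nonneg ((ℓ:ℝ)+r-M)),
      mul_nonneg (mul_nonneg hw hw) hw]
  rw [hsplit, ← hMn] at hSbound
  linarith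
end

section
/- Lower bound on short-range interactions within a tube segment (Lemma 7.1): For any finite increasing sequence of reals −ℓλ ≤ x₁ < x₂ < ⋯ < x_n ≤ r, with occupation numbers n_k = #{i : x_i ∈ Y_k}, and any real numbers (v_{ij})_{1≤i<j≤n} satisfying v_{ij} ≥ −g(x_j − x_i), one has Σ_{1≤i<j≤n} v_{ij} ≥ −C · Σ_{k=−ℓ}^{R} n_k², where C = (5/2)·g(0) + 2·Σ_{D=1}^∞ g(Dλ). In particular, under the standing assumptions on V₂ this applies to v_{ij} = V₂(y_i, y_j; x_j − x_i). -/
/-!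
Give each particle the cell index `min ⌊x / λ⌋ R`. Two particles in cells `a ≤ b` are at distance
at least `(b - a - 1) λ`, so their interaction is bounded below by `-k (b - a)` for the kernel
`k 0 = k 1 = g 0`, `k d = g ((d - 1) λ)`. Grouping pairs by cells bounds the total by
`∑_{a,b} n_a n_b k (b - a)`, and `n_a n_b ≤ (n_a² + n_b²) / 2` (Schur's test) bounds this by
`(∑_d k d) ∑_a n_a² = (2 g 0 + ∑_{D ≥ 1} g (D λ)) ∑_a n_a²`.
-/

open Finset

section ConvolutionBound

variable {G : Type*} [AddGroup G] {k : G → ℝ}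

lemma sum_apply_sub_right_le_tsum (hk0 : 0 ≤ k) (hk : Summable k) (s : Finset G) (a : G) :
    ∑ b ∈ s, k (b - a) ≤ ∑' d, k d := by
  rw [← (Equiv.subRight a).tsum_eq]
  exact Summable.sum_le_tsum s (fun b _ => hk0 _) ((Equiv.subRight a).summable_iff.mpr hk)

lemma sum_apply_sub_left_le_tsum (hk0 : 0 ≤ k) (hk : Summable k) (s : Finset G) (b : G) :
    ∑ a ∈ s, k (b - a) ≤ ∑' d, k d := by
  rw [← (Equiv.subLeft b).tsum_eq]
  exact Summable.sum_le_tsum s (fun a _ => hk0 _) ((Equiv.subLeft b).summable_iff.mpr hk)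

/-- Schur's test for a translation-invariant kernel: row and column sums are both `∑' d, k d`. -/
lemma sum_sum_mul_mul_le_tsum_mul_sum_sq (hk0 : 0 ≤ k) (hk : Summable k) (s : Finset G)
    (u : G → ℝ) :
    ∑ a ∈ s, ∑ b ∈ s, u a * u b * k (b - a) ≤ (∑' d, k d) * ∑ a ∈ s, u a ^ 2 := by
  have hrows : ∑ a ∈ s, ∑ b ∈ s, u a ^ 2 * k (b - a) ≤ (∑' d, k d) * ∑ a ∈ s, u a ^ 2 := by
    rw [mul_sum]
    refine sum_le_sum fun a _ => ?_
    rw [← mul_sum, mul_comm]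
    exact mul_le_mul_of_nonneg_right (sum_apply_sub_right_le_tsum hk0 hk s a) (sq_nonneg _)
  have hcols : ∑ a ∈ s, ∑ b ∈ s, u b ^ 2 * k (b - a) ≤ (∑' d, k d) * ∑ b ∈ s, u b ^ 2 := by
    rw [sum_comm, mul_sum]
    refine sum_le_sum fun b _ => ?_
    rw [← mul_sum, mul_comm]
    exact mul_le_mul_of_nonneg_right (sum_apply_sub_left_le_tsum hk0 hk s b) (sq_nonneg _)
  have hamgm : 2 * ∑ a ∈ s, ∑ b ∈ s, u a * u b * k (b - a) ≤
      ∑ a ∈ s, ∑ b ∈ s, u a ^ 2 * k (b - a) + ∑ a ∈ s, ∑ b ∈ s, u b ^ 2 * k (b - a) := by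
    simp only [mul_sum, ← sum_add_distrib]
    exact sum_le_sum fun a _ => sum_le_sum fun b _ => by
      nlinarith [mul_nonneg (sq_nonneg (u a - u b)) (hk0 (b - a))]
  linarith

end ConvolutionBound

lemma sum_comp_eq_sum_card_mul {ι κ : Type*} [Fintype ι] [DecidableEq κ] {c : ι → κ}
    {t : Finset κ} (hc : ∀ i, c i ∈ t) (f : κ → ℝ) :
    ∑ i, f (c i) = ∑ a ∈ t, (#{i | c i = a} : ℝ) * f a := by
  rw [← sum_fiberwise_of_maps_to' (fun i _ => hc i) f]
  simp only [sum_const, nsmul_eq_mul]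

lemma sum_sum_comp_eq_sum_sum_card_mul {ι κ : Type*} [Fintype ι] [DecidableEq κ] {c : ι → κ}
    {t : Finset κ} (hc : ∀ i, c i ∈ t) (φ : κ → κ → ℝ) :
    ∑ i, ∑ j, φ (c i) (c j) =
      ∑ a ∈ t, ∑ b ∈ t, (#{i | c i = a} : ℝ) * #{j | c j = b} * φ a b := by
  simp only [sum_comp_eq_sum_card_mul hc, mul_assoc, ← mul_sum]
  exact sum_comp_eq_sum_card_mul hc (fun a => ∑ b ∈ t, (#{j | c j = b} : ℝ) * φ a b)

section Cells

variable {lam : ℝ} {R : ℤ}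

noncomputable def cellIndex (lam : ℝ) (R : ℤ) (x : ℝ) : ℤ := min ⌊x / lam⌋ R

lemma cellIndex_mono (hlam : 0 < lam) : Monotone (cellIndex lam R) := fun _ _ hxy =>
  min_le_min_right R (Int.floor_le_floor (div_le_div_of_nonneg_right hxy hlam.le))

lemma cellIndex_mul_le (hlam : 0 < lam) (x : ℝ) : (cellIndex lam R x : ℝ) * lam ≤ x := by
  rw [← le_div_iff₀ hlam]
  exact (Int.cast_le.mpr (min_le_left _ _)).trans (Int.floor_le _)

lemma lt_cellIndex_add_one_mul (hlam : 0 < lam) {x : ℝ} (hx : cellIndex lam R x < R) :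
    x < ((cellIndex lam R x : ℝ) + 1) * lam := by
  have hfloor : cellIndex lam R x = ⌊x / lam⌋ := min_eq_left (by unfold cellIndex at hx; omega)
  rw [← div_lt_iff₀ hlam, hfloor]
  exact Int.lt_floor_add_one _

lemma le_cellIndex (hlam : 0 < lam) {m : ℤ} (hmR : m ≤ R) {x : ℝ} (hx : m * lam ≤ x) :
    m ≤ cellIndex lam R x :=
  le_min (Int.le_floor.mpr ((le_div_iff₀ hlam).mpr hx)) hmR

lemma cellIndex_eq_iff_mem_Ico (hlam : 0 < lam) {k : ℤ} (hk : k < R) (x : ℝ) :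
    cellIndex lam R x = k ↔ x ∈ Set.Ico ((k : ℝ) * lam) (((k : ℝ) + 1) * lam) := by
  rw [Set.mem_Ico, ← le_div_iff₀ hlam, ← div_lt_iff₀ hlam, ← Int.floor_eq_iff, cellIndex]
  omega

lemma cellIndex_eq_iff_mem_Icc (hlam : 0 < lam) {x r : ℝ} (hx : x ≤ r) :
    cellIndex lam R x = R ↔ x ∈ Set.Icc ((R : ℝ) * lam) r := by
  rw [Set.mem_Icc, ← le_div_iff₀ hlam, ← Int.le_floor, cellIndex]
  constructor
  · intro h; exact ⟨by omega, hx⟩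
  · intro h; omega

lemma cell_gap_mul_le_sub (hlam : 0 < lam) {x y : ℝ} (hxy : x ≤ y) :
    (((cellIndex lam R y - cellIndex lam R x).toNat - 1 : ℕ) : ℝ) * lam ≤ y - x := by
  set a := cellIndex lam R x
  set b := cellIndex lam R y
  rcases le_or_gt (b - a) 1 with hd | hd
  · rw [show (b - a).toNat - 1 = 0 by omega]
    simpa using hxy
  · have hx := lt_cellIndex_add_one_mul hlam (show a < R by
      have : b ≤ R := min_le_right _ _
      omega)
    have hy := cellIndex_mul_le (R := R) hlam y
    have hcast : (((b - a).toNat - 1 : ℕ) : ℝ) = (b : ℝ) - a - 1 := by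
      rw [show (b - a).toNat - 1 = (b - a - 1).toNat by omega]
      exact_mod_cast Int.toNat_of_nonneg (by omega)
    rw [hcast]
    linarith

end Cells

section Kernel

variable {g : ℝ → ℝ} {lam : ℝ}

/-- The weight of a pair of cells `a ≤ b` is `g ((b - a - 1) λ)`, extended by `0` to `b < a`;
the truncated subtraction in `ℕ` gives the two nearest cells the weight `g 0`. -/
noncomputable def cellKernel (g : ℝ → ℝ) (lam : ℝ) : ℤ → ℝ :=
  Function.extend ((↑) : ℕ → ℤ) (fun m => g (((m - 1 : ℕ) : ℝ) * lam)) 0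

lemma cellKernel_natCast (m : ℕ) : cellKernel g lam m = g (((m - 1 : ℕ) : ℝ) * lam) :=
  Nat.cast_injective.extend_apply _ _ m

lemma cellKernel_nonneg (hlam : 0 ≤ lam) (hg_nonneg : ∀ x : ℝ, 0 ≤ x → 0 ≤ g x) :
    0 ≤ cellKernel g lam := by
  intro d
  by_cases hd : ∃ m : ℕ, (m : ℤ) = d
  · obtain ⟨m, rfl⟩ := hd
    rw [cellKernel_natCast]
    exact hg_nonneg _ (by positivity)
  · rw [cellKernel, Function.extend_apply' _ _ _ hd]

lemma hasSum_cellKernel (hg_sum : Summable fun D : ℕ => g (((D : ℝ) + 1) * lam)) :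
    HasSum (cellKernel g lam) (2 * g 0 + ∑' D : ℕ, g (((D : ℝ) + 1) * lam)) := by
  refine (hasSum_extend_zero Nat.cast_injective).mpr ((hasSum_nat_add_iff' 2).mp ?_)
  have hshift : (fun D : ℕ => g ((((D + 2 : ℕ) - 1 : ℕ) : ℝ) * lam)) =
      fun D : ℕ => g (((D : ℝ) + 1) * lam) := by
    funext D
    push_cast [Nat.add_sub_assoc one_le_two]
    ring_nf
  simp only [sum_range_succ, sum_range_zero]
  rw [hshift, show (0 - 1 : ℕ) = 0 from rfl, Nat.cast_zero, zero_mul,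
    show 2 * g 0 + ∑' D : ℕ, g (((D : ℝ) + 1) * lam) - (0 + g 0 + g 0) =
      ∑' D : ℕ, g (((D : ℝ) + 1) * lam) by ring]
  exact hg_sum.hasSum

lemma apply_sub_le_cellKernel (hlam : 0 < lam)
    (hg_dec : ∀ ⦃x y : ℝ⦄, 0 ≤ x → x ≤ y → g y ≤ g x) (R : ℤ) {x y : ℝ} (hxy : x ≤ y) :
    g (y - x) ≤ cellKernel g lam (cellIndex lam R y - cellIndex lam R x) := by
  have hd : 0 ≤ cellIndex lam R y - cellIndex lam R x := sub_nonneg.mpr (cellIndex_mono hlam hxy)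
  rw [← Int.toNat_of_nonneg hd, cellKernel_natCast]
  exact hg_dec (by positivity) (cell_gap_mul_le_sub hlam hxy)

end Kernel

/-- Lower bound on short-range interactions within a tube segment (Lemma 7.1):
for particles `-ℓλ ≤ x₁ < ⋯ < x_n ≤ r` with occupation numbers `n_k` of the cells
`Y_k = [kλ,(k+1)λ)` (`k = -ℓ,…,R-1`) and `Y_R = [Rλ,r]`, and any `v_{ij} ≥ -g(x_j - x_i)`,
one has `Σ_{i<j} v_{ij} ≥ -C Σ_{k=-ℓ}^{R} n_k²` with
`C = (5/2) g(0) + 2 Σ_{D=1}^∞ g(Dλ)`. -/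
theorem interaction_lower_bound (lam : ℝ) (hlam : 0 < lam) (g : ℝ → ℝ)
    (hg_nonneg : ∀ x : ℝ, 0 ≤ x → 0 ≤ g x)
    (hg_dec : ∀ ⦃x y : ℝ⦄, 0 ≤ x → x ≤ y → g y ≤ g x)
    (hg_sum : Summable fun D : ℕ => g (((D : ℝ) + 1) * lam))
    (ℓ : ℕ) (r : ℝ) (hr : 0 < r)
    (n : ℕ) (x : Fin n → ℝ) (hx : StrictMono x)
    (hxlb : ∀ i, -(ℓ : ℝ) * lam ≤ x i) (hxub : ∀ i, x i ≤ r)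
    (v : Fin n → Fin n → ℝ) (hv : ∀ i j : Fin n, i < j → -g (x j - x i) ≤ v i j)
    (nk : ℤ → ℕ)
    (hnk : ∀ k : ℤ, k < ⌊r / lam⌋ →
      nk k = Nat.card {i : Fin n // x i ∈ Set.Ico ((k : ℝ) * lam) (((k : ℝ) + 1) * lam)})
    (hnkR : nk ⌊r / lam⌋ =
      Nat.card {i : Fin n // x i ∈ Set.Icc ((⌊r / lam⌋ : ℝ) * lam) r}) :
    -(((5 / 2) * g 0 + 2 * ∑' D : ℕ, g (((D : ℝ) + 1) * lam)) *
        ∑ k ∈ Finset.Icc (-(ℓ : ℤ)) ⌊r / lam⌋, (nk k : ℝ) ^ 2) ≤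
      ∑ i : Fin n, ∑ j : Fin n, if i < j then v i j else 0 := by
  classical
  set R := ⌊r / lam⌋
  set K := Icc (-(ℓ : ℤ)) R
  set c : Fin n → ℤ := fun i => cellIndex lam R (x i)
  set k := cellKernel g lam
  have hk0 := cellKernel_nonneg hlam.le hg_nonneg
  have hk := hasSum_cellKernel hg_sum
  have hc : ∀ i, c i ∈ K := fun i => mem_Icc.mpr
    ⟨le_cellIndex hlam (by have := Int.floor_nonneg.mpr (div_pos hr hlam).le; omega)
      (by exact_mod_cast hxlb i), min_le_right _ _⟩
  have hcount : ∀ a ∈ K, #{i | c i = a} = nk a := by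
    intro a ha
    rcases (mem_Icc.mp ha).2.lt_or_eq with haR | rfl
    · simp only [hnk a haR, Nat.card_eq_fintype_card, Fintype.card_subtype, c,
        cellIndex_eq_iff_mem_Ico hlam haR]
    · simp only [hnkR, Nat.card_eq_fintype_card, Fintype.card_subtype, c,
        cellIndex_eq_iff_mem_Icc hlam (hxub _)]
  have hpair : ∀ i j, -k (c j - c i) ≤ if i < j then v i j else 0 := by
    intro i j
    split_ifs with hij
    · exact (neg_le_neg (apply_sub_le_cellKernel hlam hg_dec R (hx hij).le)).trans (hv i j hij)
    · exact neg_nonpos.mpr (hk0 _)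
  have hC : ∑' d, k d ≤ (5 / 2) * g 0 + 2 * ∑' D : ℕ, g (((D : ℝ) + 1) * lam) := by
    have := hg_nonneg 0 le_rfl
    have : 0 ≤ ∑' D : ℕ, g (((D : ℝ) + 1) * lam) :=
      tsum_nonneg fun D => hg_nonneg _ (by positivity)
    rw [hk.tsum_eq]
    linarith
  calc -(((5 / 2) * g 0 + 2 * ∑' D : ℕ, g (((D : ℝ) + 1) * lam)) * ∑ a ∈ K, (nk a : ℝ) ^ 2)
      ≤ -((∑' d, k d) * ∑ a ∈ K, (nk a : ℝ) ^ 2) :=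
        neg_le_neg (mul_le_mul_of_nonneg_right hC (sum_nonneg fun _ _ => sq_nonneg _))
    _ ≤ -∑ a ∈ K, ∑ b ∈ K, (nk a : ℝ) * nk b * k (b - a) :=
        neg_le_neg (sum_sum_mul_mul_le_tsum_mul_sum_sq hk0 hk.summable K _)
    _ = ∑ i, ∑ j, -k (c j - c i) := by
        rw [sum_sum_comp_eq_sum_sum_card_mul hc (fun a b => -k (b - a))]
        simp only [mul_neg, sum_neg_distrib]
        refine congrArg Neg.neg (sum_congr rfl fun a ha => sum_congr rfl fun b hb => ?_)
        rw [hcount a ha, hcount b hb]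
    _ ≤ ∑ i, ∑ j, if i < j then v i j else 0 :=
        sum_le_sum fun i _ => sum_le_sum fun j _ => hpair i j
end

section
/- Lower bound on the interaction between a tube segment and its complement for regular configurations (Lemma 7.2): There exists a constant C < ∞, depending only on W, λ and g, such that for every γ ∈ ℕ with γ ≥ 1, every ℓ ∈ ℕ with ℓ ≤ n₁, every r ∈ (0, L₂), and every regular configuration ω: Σ_{j : (x_j,y_j) ∈ Y} Σ_{k : (x_k,y_k) ∉ Y} V₂(y_j, y_k; |x_j − x_k|) ≥ −C · γ · max_{−ℓ ≤ k ≤ R} n_k(ω). -/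
open Real MeasureTheory Finset
open scoped ENNReal

/-!
Since `V₂ ≥ -g`, it suffices to bound `∑ g |x_j - x_k|` over pairs with `x_j ∈ Y = [a, r]`,
`a = -ℓλ`, and `x_k ∉ Y`, split according to `x_k > r` or `x_k < a`. On the right the distance
is the sum of the depths `r - x_j` and `x_k - r`. A window of length `λ` meets at most two
cells, so it holds at most `2M` particles of `Y` (`M` the largest cell count), while the bounds
on the particle excess `K` leave room for at most `2(s + 1) + 2γ + 1 ≤ 5γ(s + 1)` particles
within distance `(s + 1)λ` to the right of `r` (and `2(s + 1)` to the left of `a`). Grouping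
the pairs by the sum `s` of the two depths in units of `λ` bounds each side by
`10 γ M ∑ (s + 1) g(sλ)`, a series that converges because `∫ x g(x) dx < ∞`.
-/

theorem summable_succ_mul_of_integrableOn {g : ℝ → ℝ} {lam : ℝ} (hlam : 0 < lam)
    (hg0 : ∀ x, 0 ≤ x → 0 ≤ g x) (hg : AntitoneOn g (Set.Ici 0))
    (hint : IntegrableOn (fun x => x * g x) (Set.Ici 0)) :
    Summable fun s : ℕ => ((s : ℝ) + 1) * g (s * lam) := by
  set B : ℕ → Set ℝ := fun s => Set.Ico ((s + 1) * lam) ((s + 2) * lam)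
  have hB_nonneg (s : ℕ) {x : ℝ} (hx : x ∈ B s) : 0 ≤ x :=
    (show (0 : ℝ) ≤ (s + 1) * lam by positivity).trans hx.1
  have hblock (s : ℕ) : lam ^ 2 * (((s : ℝ) + 1) * g ((s + 2) * lam)) ≤
      ∫ x in B s, x * g x := by
    have hvol : volume.real (B s) = lam := by
      simp only [B, Real.volume_real_Ico]; rw [max_eq_left] <;> linarith
    calc lam ^ 2 * (((s : ℝ) + 1) * g ((s + 2) * lam))
        = ((s + 1) * lam * g ((s + 2) * lam)) * volume.real (B s) := by rw [hvol]; ring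
      _ ≤ _ := by
        refine setIntegral_ge_of_const_le_real measurableSet_Ico measure_Ico_lt_top.ne
          (fun x hx => ?_) (hint.mono_set fun x hx => hB_nonneg s hx)
        exact mul_le_mul hx.1 (hg (hB_nonneg s hx) (Set.mem_Ici.2 (by positivity)) hx.2.le)
          (hg0 _ (by positivity)) (hB_nonneg s hx)
  have hblocks : Summable fun s => ∫ x in B s, x * g x := by
    have hmono : Monotone fun s : ℕ => ((s : ℝ) + 1) * lam := fun a b h => by
      have : (a : ℝ) ≤ b := by exact_mod_cast h
      dsimp only; gcongr
    refine (hasSum_integral_iUnion (fun _ => measurableSet_Ico)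
      (hmono.pairwise_disjoint_on_Ico_succ.mono fun _ _ h => ?_)
      (hint.mono_set (Set.iUnion_subset fun s x hx => hB_nonneg s hx))).summable
    simpa [B, add_assoc, one_add_one_eq_two] using h
  have hshift : Summable fun s : ℕ => ((s : ℝ) + 1) * g ((s + 2) * lam) :=
    (summable_mul_left_iff (pow_ne_zero 2 hlam.ne')).1 <| hblocks.of_nonneg_of_le
      (fun s => by have := hg0 ((s + 2) * lam) (by positivity); positivity) hblock
  refine (summable_nat_add_iff 2).1 <| (hshift.mul_left 3).of_nonneg_of_le
    (fun s => mul_nonneg (by positivity) (hg0 _ (by positivity))) fun s => ?_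
  have := hg0 ((s + 2) * lam) (by positivity)
  push_cast
  nlinarith

theorem card_filter_add_eq_le {ι κ : Type*} (I : Finset ι) (O : Finset κ) (a : ι → ℕ)
    (b : κ → ℕ) {m : ℕ} (ha : ∀ n, #{j ∈ I | a j = n} ≤ m) (s : ℕ) :
    #{p ∈ I ×ˢ O | a p.1 + b p.2 = s} ≤ m * #{k ∈ O | b k ≤ s} := by
  classical
  refine card_le_mul_card_image_of_maps_to (f := Prod.snd) (fun p hp => ?_) m fun k hk => ?_
  · simp only [mem_filter, mem_product] at hp ⊢
    exact ⟨hp.1.2, by omega⟩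
  · refine (card_le_card_of_injOn Prod.fst (fun p hp => ?_) fun p hp q hq hpq => ?_).trans
      (ha (s - b k))
    · simp only [coe_filter, mem_filter, mem_product, Set.mem_ofPred_eq] at hp hk ⊢
      obtain ⟨⟨⟨hpI, -⟩, hs⟩, rfl⟩ := hp
      exact ⟨hpI, by omega⟩
    · simp only [coe_filter, mem_filter, Set.mem_ofPred_eq] at hp hq
      exact Prod.ext hpq (hp.2.trans hq.2.symm)

theorem sum_sum_le_tsum_of_card_le {ι κ : Type*} {f : ℝ → ℝ} {lam : ℝ} (hlam : 0 < lam)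
    (hf0 : ∀ x, 0 ≤ x → 0 ≤ f x) (hf : AntitoneOn f (Set.Ici 0))
    (I : Finset ι) (O : Finset κ) {u : ι → ℝ} {v : κ → ℝ}
    (hu : ∀ j ∈ I, 0 ≤ u j) (hv : ∀ k ∈ O, 0 ≤ v k) {m : ℕ}
    (hI : ∀ n : ℕ, #{j ∈ I | u j ∈ Set.Ico (n * lam) ((n + 1) * lam)} ≤ m) {c : ℕ → ℝ}
    (hO : ∀ s : ℕ, #{k ∈ O | v k < (s + 1) * lam} ≤ c s)
    (hc : Summable fun s : ℕ => c s * f (s * lam)) :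
    ∑ j ∈ I, ∑ k ∈ O, f (u j + v k) ≤ m * ∑' s : ℕ, c s * f (s * lam) := by
  classical
  -- round both depths down to multiples of `lam` and group the pairs by the sum of the two
  set a : ι → ℕ := fun j => ⌊u j / lam⌋₊
  set b : κ → ℕ := fun k => ⌊v k / lam⌋₊
  have floor_mul_le {t : ℝ} (ht : 0 ≤ t) : (⌊t / lam⌋₊ : ℝ) * lam ≤ t :=
    (le_div_iff₀ hlam).1 (Nat.floor_le (div_nonneg ht hlam.le))
  have ha (n : ℕ) : #{j ∈ I | a j = n} ≤ m := by
    refine le_of_eq_of_le (congrArg card (filter_congr fun j hj => ?_)) (hI n)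
    rw [Nat.floor_eq_iff (div_nonneg (hu j hj) hlam.le), le_div_iff₀ hlam, div_lt_iff₀ hlam,
      Set.mem_Ico]
  have hb (s : ℕ) : #{k ∈ O | b k ≤ s} = #{k ∈ O | v k < (s + 1) * lam} := by
    refine congrArg card (filter_congr fun k hk => ?_)
    rw [← Nat.lt_succ_iff, Nat.floor_lt (div_nonneg (hv k hk) hlam.le), div_lt_iff₀ hlam]
    push_cast; rfl
  have hfiber (s : ℕ) : (#{p ∈ I ×ˢ O | a p.1 + b p.2 = s} : ℝ) ≤ m * c s :=
    calc (#{p ∈ I ×ˢ O | a p.1 + b p.2 = s} : ℝ) ≤ m * #{k ∈ O | b k ≤ s} := by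
          exact_mod_cast card_filter_add_eq_le I O a b ha s
      _ ≤ m * c s := by rw [hb]; gcongr; exact hO s
  calc ∑ j ∈ I, ∑ k ∈ O, f (u j + v k)
      ≤ ∑ p ∈ I ×ˢ O, f ((a p.1 + b p.2 : ℕ) * lam) := by
        rw [sum_product]
        refine sum_le_sum fun j hj => sum_le_sum fun k hk => hf (Set.mem_Ici.2 (by positivity))
          (Set.mem_Ici.2 (add_nonneg (hu j hj) (hv k hk))) ?_
        push_cast
        rw [add_mul]
        exact add_le_add (floor_mul_le (hu j hj)) (floor_mul_le (hv k hk))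
    _ = ∑ s ∈ (I ×ˢ O).image fun p => a p.1 + b p.2,
          #{p ∈ I ×ˢ O | a p.1 + b p.2 = s} • f (s * lam) :=
        sum_comp (fun s : ℕ => f (s * lam)) _
    _ ≤ ∑ s ∈ (I ×ˢ O).image fun p => a p.1 + b p.2, m * (c s * f (s * lam)) := by
        refine sum_le_sum fun s _ => ?_
        rw [nsmul_eq_mul, ← mul_assoc]
        exact mul_le_mul_of_nonneg_right (hfiber s) (hf0 _ (by positivity))
    _ ≤ m * ∑' s : ℕ, c s * f (s * lam) := by
        rw [← mul_sum]
        refine mul_le_mul_of_nonneg_left (hc.sum_le_tsum _ fun s _ => ?_) (Nat.cast_nonneg m)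
        exact mul_nonneg ((Nat.cast_nonneg _).trans (hO s)) (hf0 _ (by positivity))

@[norm_cast]
theorem EReal.coe_finset_sum {ι : Type*} (s : Finset ι) (f : ι → ℝ) :
    ((∑ i ∈ s, f i : ℝ) : EReal) = ∑ i ∈ s, (f i : EReal) :=
  map_sum (⟨⟨Real.toEReal, EReal.coe_zero⟩, EReal.coe_add⟩ : ℝ →+ EReal) f s

theorem neg_le_sum_sum_ite_of_neg_le {ι : Type*} [Fintype ι] (P Q : ι → Prop)
    [DecidablePred P] [DecidablePred Q] {f : ι → ι → ℝ} {V : ι → ι → EReal}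
    (hV : ∀ j k, P j → Q k → ((-f j k : ℝ) : EReal) ≤ V j k) {B : ℝ}
    (hB : ∑ j, ∑ k, (if P j ∧ Q k then f j k else 0) ≤ B) :
    ((-B : ℝ) : EReal) ≤ ∑ j, ∑ k, if P j ∧ Q k then V j k else 0 :=
  calc ((-B : ℝ) : EReal)
      ≤ ((∑ j, ∑ k, -(if P j ∧ Q k then f j k else 0) : ℝ) : EReal) := by
        rw [EReal.coe_le_coe_iff]
        simpa only [sum_neg_distrib] using neg_le_neg hB
    _ ≤ ∑ j, ∑ k, if P j ∧ Q k then V j k else 0 := by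
        push_cast
        refine sum_le_sum fun j _ => sum_le_sum fun k _ => ?_
        split_ifs with h
        · exact hV j k h.1 h.2
        · simp

theorem neg_le_of_abs_le_infDist_Icc {K : ℝ → ℝ} {a b r γ lam : ℝ} (hlam : 0 < lam)
    (hab : a ≤ b) (hbr : b ≤ r) (hrb : r < b + lam)
    (hK : ∀ t ∉ Set.Icc a r, |K t| ≤ γ + Metric.infDist t (Set.Icc a b) / lam) {t : ℝ}
    (ht : r < t) : -K t ≤ γ + 1 + (t - r) / lam := by
  have hdist := Metric.infDist_le_dist_of_mem (x := t) (Set.right_mem_Icc.2 hab)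
  rw [Real.dist_eq, abs_of_nonneg (by linarith)] at hdist
  have hKt := (neg_le_abs (K t)).trans (hK t fun h => ht.not_ge h.2)
  have : (t - b) / lam ≤ (t - r) / lam + 1 := by
    rw [div_add_one hlam.ne']; gcongr; linarith
  linarith [div_le_div_of_nonneg_right hdist hlam.le]

theorem le_of_abs_le_infDist_Icc {K : ℝ → ℝ} {a b r γ lam : ℝ} (hlam : 0 < lam)
    (hab : a ≤ b) (hK : ∀ t ∉ Set.Icc a r, |K t| ≤ γ + Metric.infDist t (Set.Icc a b) / lam)
    {t : ℝ} (ht : t < a) : K t ≤ γ + (a - t) / lam := by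
  have hdist := Metric.infDist_le_dist_of_mem (x := t) (Set.left_mem_Icc.2 hab)
  rw [Real.dist_eq, abs_of_nonpos (by linarith), neg_sub] at hdist
  have hKt := (le_abs_self (K t)).trans (hK t fun h => ht.not_ge h.1)
  linarith [div_le_div_of_nonneg_right hdist hlam.le]

section Configuration

variable {ι : Type*} [Fintype ι] {x : ι → ℝ} {lam : ℝ} {K : ℝ → ℝ} {L₁ L₂ : ℝ}

def IsParticleExcess (x : ι → ℝ) (lam L₁ L₂ : ℝ) (K : ℝ → ℝ) : Prop :=
  ∀ t ∈ Set.Icc L₁ L₂, K t = (t - L₁) / lam - #{j | x j ≤ t}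

theorem card_filter_mem_Ico_le_sup (hlam : 0 < lam) {p R : ℤ} {r : ℝ}
    (hrR : r < (R + 1) * lam) {n : ℤ → ℕ}
    (hn : ∀ k < R, #{j | x j ∈ Set.Ico (k * lam) ((k + 1) * lam)} ≤ n k)
    (hnR : #{j | x j ∈ Set.Icc (R * lam) r} ≤ n R) (k : ℤ) :
    #{j | x j ∈ Set.Icc (p * lam) r ∧ x j ∈ Set.Ico (k * lam) ((k + 1) * lam)} ≤
      (Icc p R).sup n := by
  by_cases hk : k ∈ Icc p R
  · refine le_trans ?_ (le_sup hk)
    rcases (mem_Icc.1 hk).2.lt_or_eq with hkR | rfl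
    · exact (card_le_card (monotone_filter_right _ fun j _ hj => hj.2)).trans (hn k hkR)
    · exact (card_le_card (monotone_filter_right _ fun j _ hj => ⟨hj.2.1, hj.1.2⟩)).trans hnR
  · refine (card_eq_zero.2 (filter_eq_empty_iff.2 fun j _ hj => hk ?_)).trans_le (Nat.zero_le _)
    obtain ⟨⟨hpj, hjr⟩, hkj, hjk⟩ := hj
    have hpk : (p : ℝ) < k + 1 := lt_of_mul_lt_mul_right (hpj.trans_lt hjk) hlam.le
    have hkR : (k : ℝ) < R + 1 :=
      lt_of_mul_lt_mul_right (hkj.trans_lt (hjr.trans_lt hrR)) hlam.le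
    exact mem_Icc.2 ⟨Int.lt_add_one_iff.1 (by exact_mod_cast hpk),
      Int.lt_add_one_iff.1 (by exact_mod_cast hkR)⟩

theorem card_filter_mem_Icc_le_two_mul_sup (hlam : 0 < lam) {p R : ℤ} {r : ℝ}
    (hrR : r < (R + 1) * lam) {n : ℤ → ℕ}
    (hn : ∀ k < R, #{j | x j ∈ Set.Ico (k * lam) ((k + 1) * lam)} ≤ n k)
    (hnR : #{j | x j ∈ Set.Icc (R * lam) r} ≤ n R) (t : ℝ) :
    #{j | x j ∈ Set.Icc (p * lam) r ∧ x j ∈ Set.Icc t (t + lam)} ≤ 2 * (Icc p R).sup n := by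
  classical
  set c : ℤ := ⌊t / lam⌋
  have hct : (c : ℝ) * lam ≤ t := (le_div_iff₀ hlam).1 (Int.floor_le _)
  have htc : t < (c + 1) * lam := (div_lt_iff₀ hlam).1 (Int.lt_floor_add_one _)
  have hcell := card_filter_mem_Ico_le_sup (p := p) hlam hrR hn hnR
  calc #{j | x j ∈ Set.Icc (p * lam) r ∧ x j ∈ Set.Icc t (t + lam)}
      ≤ #(filter (fun j => x j ∈ Set.Icc (p * lam) r ∧ x j ∈ Set.Ico (c * lam) ((c + 1) * lam))
            univ ∪ filter (fun j => x j ∈ Set.Icc (p * lam) r ∧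
              x j ∈ Set.Ico ((c + 1 : ℤ) * lam) (((c + 1 : ℤ) + 1) * lam)) univ) := by
        refine card_le_card fun j hj => ?_
        simp only [mem_union, mem_filter, mem_univ, true_and, Set.mem_Icc] at hj ⊢
        push_cast
        by_cases hjc : x j < (c + 1) * lam
        · exact Or.inl ⟨hj.1, hct.trans hj.2.1, hjc⟩
        · exact Or.inr ⟨hj.1, not_lt.1 hjc, by linarith [hj.2.2]⟩
    _ ≤ 2 * (Icc p R).sup n := (card_union_le _ _).trans <|
        two_mul ((Icc p R).sup n) ▸ add_le_add (hcell c) (hcell (c + 1))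

theorem IsParticleExcess.card_filter_mem_Ioc_eq (hK : IsParticleExcess x lam L₁ L₂ K)
    {t₁ t₂ : ℝ} (h₁ : t₁ ∈ Set.Icc L₁ L₂) (h₂ : t₂ ∈ Set.Icc L₁ L₂) (h : t₁ ≤ t₂) :
    (#{j | x j ∈ Set.Ioc t₁ t₂} : ℝ) = (t₂ - t₁) / lam + K t₁ - K t₂ := by
  have hsplit := card_filter_add_card_filter_not (s := {j | x j ≤ t₂}) (fun j => x j ≤ t₁)
  rw [filter_filter, filter_filter] at hsplit
  have e₁ : filter (fun j => x j ≤ t₂ ∧ x j ≤ t₁) univ = filter (fun j => x j ≤ t₁) univ :=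
    filter_congr fun j _ => ⟨And.right, fun hj => ⟨hj.trans h, hj⟩⟩
  have e₂ : filter (fun j => x j ≤ t₂ ∧ ¬x j ≤ t₁) univ =
      filter (fun j => x j ∈ Set.Ioc t₁ t₂) univ :=
    filter_congr fun j _ => by rw [Set.mem_Ioc, not_le, and_comm]
  rw [e₁, e₂] at hsplit
  rw [hK t₁ h₁, hK t₂ h₂, ← hsplit]
  push_cast
  ring

theorem IsParticleExcess.card_filter_right_le (hK : IsParticleExcess x lam L₁ L₂ K)
    (hlam : 0 < lam) (hx : ∀ j, x j < L₂) {r γ w : ℝ} (hr : r ∈ Set.Ico L₁ L₂) (hw : 0 < w)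
    (hKr : K r ≤ γ) (hK_right : ∀ t ∈ Set.Ioc r L₂, -K t ≤ γ + 1 + (t - r) / lam) :
    (#{k | r < x k ∧ x k - r < w} : ℝ) ≤ 2 * (w / lam) + 2 * γ + 1 := by
  set t := min (r + w) L₂
  have hrt : r < t := lt_min (by linarith) hr.2
  have htr : (t - r) / lam ≤ w / lam := by gcongr; linarith [min_le_left (r + w) L₂]
  have hcard := hK.card_filter_mem_Ioc_eq (Set.Ico_subset_Icc_self hr)
    ⟨hr.1.trans hrt.le, min_le_right _ _⟩ hrt.le
  have hsub : #{k | r < x k ∧ x k - r < w} ≤ #{k | x k ∈ Set.Ioc r t} :=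
    card_le_card <| monotone_filter_right _ fun k _ hk =>
      ⟨hk.1, le_min (by linarith [hk.2]) (hx k).le⟩
  have hKt := hK_right t ⟨hrt, min_le_right _ _⟩
  have : (#{k | r < x k ∧ x k - r < w} : ℝ) ≤ #{k | x k ∈ Set.Ioc r t} := by
    exact_mod_cast hsub
  linarith

theorem IsParticleExcess.card_filter_left_le (hK : IsParticleExcess x lam L₁ L₂ K)
    (hlam : 0 < lam) (hx : ∀ j, L₁ < x j) {a γ w : ℝ} (ha : a ∈ Set.Icc L₁ L₂) (hw : 0 ≤ w)
    (hKa : K a = γ) (hK_left : ∀ t ∈ Set.Ico L₁ a, K t ≤ γ + (a - t) / lam) :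
    (#{k | x k < a ∧ a - x k < w} : ℝ) ≤ 2 * (w / lam) := by
  set t := max (a - w) L₁
  have hta : t ≤ a := max_le (by linarith) ha.1
  have hat : (a - t) / lam ≤ w / lam := by gcongr; linarith [le_max_left (a - w) L₁]
  have hKt : K t ≤ γ + (a - t) / lam := by
    rcases hta.lt_or_eq with hta | hta
    · exact hK_left t ⟨le_max_right _ _, hta⟩
    · rw [hta, hKa, sub_self, zero_div, add_zero]
  have hcard := hK.card_filter_mem_Ioc_eq ⟨le_max_right _ _, hta.trans ha.2⟩ ha hta
  have hsub : #{k | x k < a ∧ a - x k < w} ≤ #{k | x k ∈ Set.Ioc t a} :=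
    card_le_card <| monotone_filter_right _ fun k _ hk =>
      ⟨max_lt (by linarith [hk.2]) (hx k), hk.1.le⟩
  have : (#{k | x k < a ∧ a - x k < w} : ℝ) ≤ #{k | x k ∈ Set.Ioc t a} := by
    exact_mod_cast hsub
  linarith

theorem IsParticleExcess.sum_right_le (hK : IsParticleExcess x lam L₁ L₂ K) (hlam : 0 < lam)
    {g : ℝ → ℝ} (hg0 : ∀ x, 0 ≤ x → 0 ≤ g x) (hg : AntitoneOn g (Set.Ici 0))
    (hgs : Summable fun s : ℕ => ((s : ℝ) + 1) * g (s * lam))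
    (hx : ∀ j, x j < L₂) {a r γ : ℝ} {m : ℕ} (hr : r ∈ Set.Ico L₁ L₂) (hγ : 1 ≤ γ)
    (hKr : K r ≤ γ) (hK_right : ∀ t ∈ Set.Ioc r L₂, -K t ≤ γ + 1 + (t - r) / lam)
    (hwin : ∀ t, #{j | x j ∈ Set.Icc a r ∧ x j ∈ Set.Icc t (t + lam)} ≤ m) :
    ∑ j with x j ∈ Set.Icc a r, ∑ k with r < x k, g |x j - x k| ≤
      m * (5 * γ * ∑' s : ℕ, ((s : ℝ) + 1) * g (s * lam)) := by
  have hI (n : ℕ) :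
      #{j ∈ {j | x j ∈ Set.Icc a r} | r - x j ∈ Set.Ico (n * lam) ((n + 1) * lam)} ≤ m := by
    rw [filter_filter]
    refine (card_le_card <| monotone_filter_right _ fun j _ hj => ⟨hj.1, ?_, ?_⟩).trans
      (hwin (r - (n + 1) * lam)) <;> linarith [hj.2.1, hj.2.2]
  have hO (s : ℕ) :
      (#{k ∈ {k | r < x k} | x k - r < (s + 1) * lam} : ℝ) ≤ 5 * γ * (s + 1) := by
    rw [filter_filter]
    have := hK.card_filter_right_le hlam hx hr (w := (s + 1) * lam) (by positivity) hKr hK_right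
    rw [mul_div_cancel_right₀ _ hlam.ne'] at this
    nlinarith
  calc ∑ j with x j ∈ Set.Icc a r, ∑ k with r < x k, g |x j - x k|
      = ∑ j with x j ∈ Set.Icc a r, ∑ k with r < x k, g ((r - x j) + (x k - r)) := by
        refine sum_congr rfl fun j hj => sum_congr rfl fun k hk => ?_
        simp only [mem_filter, mem_univ, true_and, Set.mem_Icc] at hj hk
        rw [abs_of_neg (by linarith)]; ring_nf
    _ ≤ m * ∑' s : ℕ, 5 * γ * (s + 1) * g (s * lam) :=
        sum_sum_le_tsum_of_card_le hlam hg0 hg _ _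
          (fun j hj => by simp only [mem_filter, mem_univ, true_and, Set.mem_Icc] at hj; linarith)
          (fun k hk => by simp only [mem_filter, mem_univ, true_and] at hk; linarith) hI hO
          (by simpa only [mul_assoc] using hgs.mul_left (5 * γ))
    _ = m * (5 * γ * ∑' s : ℕ, ((s : ℝ) + 1) * g (s * lam)) := by
        simp only [mul_assoc, tsum_mul_left]

theorem IsParticleExcess.sum_left_le (hK : IsParticleExcess x lam L₁ L₂ K) (hlam : 0 < lam)
    {g : ℝ → ℝ} (hg0 : ∀ x, 0 ≤ x → 0 ≤ g x) (hg : AntitoneOn g (Set.Ici 0))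
    (hgs : Summable fun s : ℕ => ((s : ℝ) + 1) * g (s * lam))
    (hx : ∀ j, L₁ < x j) {a r γ : ℝ} {m : ℕ} (ha : a ∈ Set.Icc L₁ L₂) (hγ : 1 ≤ γ)
    (hKa : K a = γ) (hK_left : ∀ t ∈ Set.Ico L₁ a, K t ≤ γ + (a - t) / lam)
    (hwin : ∀ t, #{j | x j ∈ Set.Icc a r ∧ x j ∈ Set.Icc t (t + lam)} ≤ m) :
    ∑ j with x j ∈ Set.Icc a r, ∑ k with x k < a, g |x j - x k| ≤
      m * (5 * γ * ∑' s : ℕ, ((s : ℝ) + 1) * g (s * lam)) := by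
  have hI (n : ℕ) :
      #{j ∈ {j | x j ∈ Set.Icc a r} | x j - a ∈ Set.Ico (n * lam) ((n + 1) * lam)} ≤ m := by
    rw [filter_filter]
    refine (card_le_card <| monotone_filter_right _ fun j _ hj => ⟨hj.1, ?_, ?_⟩).trans
      (hwin (a + n * lam)) <;> linarith [hj.2.1, hj.2.2]
  have hO (s : ℕ) :
      (#{k ∈ {k | x k < a} | a - x k < (s + 1) * lam} : ℝ) ≤ 5 * γ * (s + 1) := by
    rw [filter_filter]
    have := hK.card_filter_left_le hlam hx ha (w := (s + 1) * lam) (by positivity) hKa hK_left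
    rw [mul_div_cancel_right₀ _ hlam.ne'] at this
    nlinarith
  calc ∑ j with x j ∈ Set.Icc a r, ∑ k with x k < a, g |x j - x k|
      = ∑ j with x j ∈ Set.Icc a r, ∑ k with x k < a, g ((x j - a) + (a - x k)) := by
        refine sum_congr rfl fun j hj => sum_congr rfl fun k hk => ?_
        simp only [mem_filter, mem_univ, true_and, Set.mem_Icc] at hj hk
        rw [abs_of_pos (by linarith)]; ring_nf
    _ ≤ m * ∑' s : ℕ, 5 * γ * (s + 1) * g (s * lam) :=
        sum_sum_le_tsum_of_card_le hlam hg0 hg _ _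
          (fun j hj => by simp only [mem_filter, mem_univ, true_and, Set.mem_Icc] at hj; linarith)
          (fun k hk => by simp only [mem_filter, mem_univ, true_and] at hk; linarith) hI hO
          (by simpa only [mul_assoc] using hgs.mul_left (5 * γ))
    _ = m * (5 * γ * ∑' s : ℕ, ((s : ℝ) + 1) * g (s * lam)) := by
        simp only [mul_assoc, tsum_mul_left]

theorem IsParticleExcess.sum_segment_complement_le (hK : IsParticleExcess x lam L₁ L₂ K)
    (hlam : 0 < lam) {g : ℝ → ℝ} (hg0 : ∀ x, 0 ≤ x → 0 ≤ g x) (hg : AntitoneOn g (Set.Ici 0))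
    (hgs : Summable fun s : ℕ => ((s : ℝ) + 1) * g (s * lam))
    (hx : ∀ j, x j ∈ Set.Ioo L₁ L₂) {r γ : ℝ} {p R : ℤ} {n : ℤ → ℕ}
    (hL₁p : L₁ ≤ p * lam) (hpR : p ≤ R) (hRr : R * lam ≤ r) (hrR : r < (R + 1) * lam)
    (hrL₂ : r < L₂) (hγ : 1 ≤ γ) (hKp : K (p * lam) = γ) (hKr : K r ≤ γ)
    (hK_out : ∀ t ∉ Set.Icc (p * lam) r,
      |K t| ≤ γ + Metric.infDist t (Set.Icc (p * lam) (R * lam)) / lam)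
    (hn : ∀ k < R, #{j | x j ∈ Set.Ico (k * lam) ((k + 1) * lam)} ≤ n k)
    (hnR : #{j | x j ∈ Set.Icc (R * lam) r} ≤ n R) :
    ∑ j, ∑ k, (if x j ∈ Set.Icc (p * lam) r ∧ x k ∉ Set.Icc (p * lam) r
      then g |x j - x k| else 0) ≤
      20 * (∑' s : ℕ, ((s : ℝ) + 1) * g (s * lam)) * γ * (Icc p R).sup n := by
  classical
  have hpR' : (p : ℝ) * lam ≤ R * lam := by gcongr
  have hwin := card_filter_mem_Icc_le_two_mul_sup (p := p) hlam hrR hn hnR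
  have hright := hK.sum_right_le hlam hg0 hg hgs (fun j => (hx j).2)
    ⟨hL₁p.trans (hpR'.trans hRr), hrL₂⟩ hγ hKr
    (fun t ht => neg_le_of_abs_le_infDist_Icc hlam hpR' hRr (by linarith) hK_out ht.1) hwin
  have hleft := hK.sum_left_le hlam hg0 hg hgs (fun j => (hx j).1)
    ⟨hL₁p, hpR'.trans (hRr.trans hrL₂.le)⟩ hγ hKp
    (fun t ht => le_of_abs_le_infDist_Icc hlam hpR' hK_out ht.2) hwin
  have hsplit (j : ι) : ∑ k, (if x j ∈ Set.Icc (p * lam) r ∧ x k ∉ Set.Icc (p * lam) r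
      then g |x j - x k| else 0) = if x j ∈ Set.Icc (p * lam) r then
        ∑ k with x k < p * lam, g |x j - x k| + ∑ k with r < x k, g |x j - x k| else 0 := by
    split_ifs with hj
    · rw [← sum_union (disjoint_filter.2 fun k _ h₁ h₂ => by linarith [hpR'.trans hRr]),
        ← filter_or, sum_filter]
      refine sum_congr rfl fun k _ => if_congr ?_ rfl rfl
      simp [hj, Set.mem_Icc, imp_iff_not_or]
    · simp [hj]
  rw [sum_congr rfl fun j _ => hsplit j, ← sum_filter, sum_add_distrib]
  push_cast at hleft hright
  linarith

end Configuration

/-- Lower bound on the interaction between a tube segment and its complement for regular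
configurations (Lemma 7.2): there is `C < ∞`, depending only on `W`, `λ` and `g`, such
that for every `γ ≥ 1`, `ℓ ≤ n₁`, `r ∈ (0, L₂)` and every regular configuration `ω`,
`Σ_{j ∈ Y} Σ_{k ∉ Y} V₂(y_j, y_k; |x_j - x_k|) ≥ -C γ max_{-ℓ ≤ k ≤ R} n_k(ω)`. -/
theorem segment_complement_interaction_bound
    (W lam : ℝ) (hW : 0 < W) (hlam : lam = 1 / W)
    (g : ℝ → ℝ) (hg_nonneg : ∀ x : ℝ, 0 ≤ x → 0 ≤ g x)
    (hg_dec : ∀ ⦃x y : ℝ⦄, 0 ≤ x → x ≤ y → g y ≤ g x)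
    (hg_int : IntegrableOn (fun x => x * g x) (Set.Ici (0:ℝ))) :
    ∃ C : ℝ, 0 < C ∧
      ∀ (D : Type) [MeasurableSpace D] (ν : Measure D),
        ν Set.univ = ENNReal.ofReal W →
        ∀ V₂ : D → D → ℝ → EReal,
          (Measurable fun p : D × D × ℝ => V₂ p.1 p.2.1 p.2.2) →
          (∀ (y y' : D) (x : ℝ), V₂ y y' x = V₂ y' y x) →
          (∀ x : ℝ, 0 < x → ∀ y' : D,
            (∀ᵐ y ∂ν, V₂ y y' x ≠ ⊤) ∧
            Integrable (fun y => (V₂ y y' x).toReal) ν ∧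
            ∫ y, (V₂ y y' x).toReal ∂ν = 0) →
          (∀ (y y' : D) (x : ℝ), 0 < x → (↑(-g x) : EReal) ≤ V₂ y y' x) →
          (∀ ε : ℝ, 0 < ε → ∃ c : ℝ, ∀ (y y' : D) (x : ℝ), ε ≤ x →
            V₂ y y' x ≤ (↑(c * g x) : EReal)) →
          ∀ (n₁ n₂ γ ℓ : ℕ), 1 ≤ γ → ℓ ≤ n₁ →
            ∀ r : ℝ, 0 < r → r < (n₂ : ℝ) * lam →
              let N : ℕ := n₁ + n₂
              let L₁ : ℝ := -(n₁ : ℝ) * lam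
              let L₂ : ℝ := (n₂ : ℝ) * lam
              let R : ℤ := ⌊r / lam⌋
              ∀ (x : Fin N → ℝ) (y : Fin N → D),
                StrictMono x → (∀ j, x j ∈ Set.Ioo L₁ L₂) →
                let K : ℝ → ℝ := fun u =>
                  if u ∈ Set.Icc L₁ L₂ then
                    (u - L₁) / lam - (Nat.card {j : Fin N // x j ≤ u} : ℝ)
                  else 0
                let n : ℤ → ℕ := fun k =>
                  if k < R then
                    Nat.card {j : Fin N // x j ∈ Set.Ico ((k : ℝ) * lam) (((k : ℝ) + 1) * lam)}
                  else Nat.card {j : Fin N // x j ∈ Set.Icc ((R : ℝ) * lam) r}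
                -- regularity of the configuration:
                K (-(ℓ : ℝ) * lam) = γ →
                (γ : ℝ) < (r - L₁) / lam - (Nat.card {j : Fin N // x j < r} : ℝ) →
                K r ≤ γ →
                (∀ t : ℝ, t ∉ Set.Icc (-(ℓ : ℝ) * lam) r →
                  |K t| ≤ (γ : ℝ) +
                    Metric.infDist t (Set.Icc (-(ℓ : ℝ) * lam) ((R : ℝ) * lam)) / lam) →
                (↑(-(C * (γ : ℝ) *
                      (((Finset.Icc (-(ℓ : ℤ)) R).sup n : ℕ) : ℝ))) : EReal) ≤
                  ∑ j : Fin N, ∑ k : Fin N,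
                    if x j ∈ Set.Icc (-(ℓ : ℝ) * lam) r ∧ x k ∉ Set.Icc (-(ℓ : ℝ) * lam) r
                    then V₂ (y j) (y k) |x j - x k| else 0 := by
  have hlam₀ : 0 < lam := hlam ▸ one_div_pos.2 hW
  have hg : AntitoneOn g (Set.Ici 0) := fun a ha _ _ hab => hg_dec ha hab
  have hgs := summable_succ_mul_of_integrableOn hlam₀ hg_nonneg hg hg_int
  set S := ∑' s : ℕ, ((s : ℝ) + 1) * g (s * lam)
  have hS : 0 ≤ S := tsum_nonneg fun s => mul_nonneg (by positivity) (hg_nonneg _ (by positivity))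
  refine ⟨20 * S + 1, by positivity, ?_⟩
  intro D _ ν _ V₂ _ _ _ hV_low _ n₁ n₂ γ ℓ hγ hℓ r hr hrL N L₁ L₂ R x y _ hx K n hKℓ _ hKr hK_out
  have hcard (P : Fin N → Prop) [DecidablePred P] : Nat.card {j // P j} = #{j | P j} := by
    rw [Nat.card_eq_fintype_card, Fintype.card_subtype]
  have hK : IsParticleExcess x lam L₁ L₂ K := fun t ht => by simp only [K, if_pos ht, hcard]
  have hbound := hK.sum_segment_complement_le hlam₀ hg_nonneg hg hgs hx (p := -ℓ) (n := n)
    (by push_cast; nlinarith [(Nat.cast_le (α := ℝ)).2 hℓ])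
    (by have : 0 ≤ R := Int.floor_nonneg.2 (by positivity); omega)
    ((le_div_iff₀ hlam₀).1 (Int.floor_le _)) ((div_lt_iff₀ hlam₀).1 (Int.lt_floor_add_one _))
    hrL (by exact_mod_cast hγ) (by push_cast; exact hKℓ) hKr (by push_cast; exact hK_out)
    (fun k hk => by simp only [n, R, if_pos hk, hcard, le_refl])
    (by simp only [n, R, lt_irrefl, if_false, hcard, le_refl])
  push_cast at hbound
  refine neg_le_sum_sum_ite_of_neg_le _ _ (fun j k hj hk => hV_low _ _ _ ?_) (hbound.trans ?_)
  · exact abs_pos.2 (sub_ne_zero.2 fun he => hk (he ▸ hj))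
  · gcongr
    linarith
end

section
/- Exponential bounds for the short-range part of the strip potential (conditions (2.11)-(2.12) for the periodic strip): (i) For all x > 0 and all y ∈ ℝ: V₂(x,y) ≥ −(2π)^{−1}·exp(−2πx/W). (ii) For every ε > 0 there exists c(ε,W) < ∞ such that V₂(x,y) ≤ c(ε,W)·exp(−2πx/W) for all x ≥ ε and all y ∈ ℝ. -/
open Real

/-- The short-range correction `V₂` to the linear term in the periodic-strip
Coulomb potential. -/
noncomputable def stripV₂ (W x y : ℝ) : ℝ :=
  -(2 * π)⁻¹ *
    Real.log (‖1 - Complex.exp (-(2 * ↑π * ((x : ℂ) + Complex.I * (y : ℂ)) / ↑W))‖)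

/-! Writing `V₂ = -(2π)⁻¹ log ‖1 - z‖` with `‖z‖ = q = exp (-2πx/W)`, the lower bound is
`log ‖1 - z‖ ≤ ‖1 - z‖ - 1 ≤ q`, and the upper bound is `-log ‖1 - z‖ ≤ -log (1 - q) ≤ q / (1 - q)`,
where `1 - q` stays away from `0` once `x ≥ ε`. -/

theorem Complex.log_norm_one_sub_le (z : ℂ) : Real.log ‖1 - z‖ ≤ ‖z‖ := by
  rcases eq_or_ne (1 - z) 0 with h | h
  · simp [h]
  · calc Real.log ‖1 - z‖ ≤ ‖1 - z‖ - 1 := Real.log_le_sub_one_of_pos (norm_pos_iff.2 h)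
      _ ≤ ‖z‖ := by linarith [norm_sub_le (1 : ℂ) z, norm_one (α := ℂ)]

theorem Complex.neg_log_norm_one_sub_le {z : ℂ} {r : ℝ} (hz : ‖z‖ ≤ r) (hr : r < 1) :
    -Real.log ‖1 - z‖ ≤ ‖z‖ / (1 - r) := by
  have hpos : 0 < 1 - ‖z‖ := by linarith
  have hnorm : 1 - ‖z‖ ≤ ‖1 - z‖ := by simpa using norm_sub_norm_le (1 : ℂ) z
  calc -Real.log ‖1 - z‖ ≤ -Real.log (1 - ‖z‖) := neg_le_neg (Real.log_le_log hpos hnorm)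
    _ ≤ (1 - ‖z‖)⁻¹ - 1 := by linarith [Real.one_sub_inv_le_log_of_pos hpos]
    _ = ‖z‖ / (1 - ‖z‖) := by field_simp; ring
    _ ≤ ‖z‖ / (1 - r) := by gcongr

theorem norm_cexp_strip (W x y : ℝ) :
    ‖Complex.exp (-(2 * ↑π * ((x : ℂ) + Complex.I * (y : ℂ)) / ↑W))‖
      = Real.exp (-(2 * π * x / W)) := by
  rw [Complex.norm_exp, Complex.neg_re, Complex.div_ofReal_re]
  simp

/-- Exponential bounds for the short-range part of the strip potential
(conditions (2.11)-(2.12) for the periodic strip):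
(i) `V₂(x,y) ≥ -(2π)⁻¹ exp (-2πx/W)` for all `x > 0`;
(ii) for every `ε > 0` there is `c(ε,W) < ∞` with `V₂(x,y) ≤ c exp (-2πx/W)` for `x ≥ ε`. -/
theorem strip_potential_exponential_bounds (W : ℝ) (hW : 0 < W) :
    (∀ x y : ℝ, 0 < x →
      -(2 * π)⁻¹ * Real.exp (-(2 * π * x / W)) ≤ stripV₂ W x y) ∧
    (∀ ε : ℝ, 0 < ε → ∃ c : ℝ, ∀ x y : ℝ, ε ≤ x →
      stripV₂ W x y ≤ c * Real.exp (-(2 * π * x / W))) := by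
  have hc : 0 ≤ (2 * π)⁻¹ := by positivity
  refine ⟨fun x y _ => ?_, fun ε hε => ?_⟩
  · have h := Complex.log_norm_one_sub_le
      (Complex.exp (-(2 * ↑π * ((x : ℂ) + Complex.I * (y : ℂ)) / ↑W)))
    rw [norm_cexp_strip] at h
    exact mul_le_mul_of_nonpos_left h (neg_nonpos.2 hc)
  · set r := Real.exp (-(2 * π * ε / W))
    have hr : r < 1 := exp_lt_one_iff.2 (neg_neg_of_pos (by positivity))
    refine ⟨(2 * π)⁻¹ / (1 - r), fun x y hx => ?_⟩
    have hnorm := norm_cexp_strip W x y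
    rw [stripV₂]
    set z := Complex.exp (-(2 * ↑π * ((x : ℂ) + Complex.I * (y : ℂ)) / ↑W))
    have h := Complex.neg_log_norm_one_sub_le (hnorm.trans_le (exp_le_exp.2 (by gcongr))) hr
    calc -(2 * π)⁻¹ * Real.log ‖1 - z‖ = (2 * π)⁻¹ * -Real.log ‖1 - z‖ := by ring
      _ ≤ (2 * π)⁻¹ * (‖z‖ / (1 - r)) := by gcongr
      _ = (2 * π)⁻¹ / (1 - r) * Real.exp (-(2 * π * x / W)) := by rw [hnorm]; ring
end

section
/- 1D jellium energy as the squared particle-excess function (equation (6.2)): For any N ∈ ℕ and any particle positions 0 < x₁ < ⋯ < x_N < N, Σ_{1≤j<k≤N} V(x_j, x_k) − Σ_{j=1}^N ∫_0^N V(x_j, t) dt + (1/2)·∫_0^N ∫_0^N V(s,t) ds dt = (1/2)·∫_0^N K(t)² dt. -/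
/-!
Every term is computed in closed form. The particle–background and background–background
energies are elementary integrals of `|a - t|`. Writing the particle count as
`∑ j, 1[x j ≤ t]` and expanding the square reduces `∫ K ^ 2` to the integrals of `t ^ 2`,
`2 t · 1[x j ≤ t]` and `1[max (x j) (x k) ≤ t]`. Since `max a b = (a + b + |a - b|) / 2`,
both sides become the same combination of `N`, `∑ j, x j`, `∑ j, x j ^ 2` and
`∑ j, ∑ k, |x j - x k|`.
-/

open MeasureTheory Set intervalIntegral

theorem sum_sum_eq_two_nsmul_sum_sum_ite_lt {ι M : Type*} [Fintype ι] [LinearOrder ι]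
    [AddCommMonoid M] (f : ι → ι → M) (hsymm : ∀ j k, f j k = f k j) (hdiag : ∀ j, f j j = 0) :
    ∑ j, ∑ k, f j k = 2 • ∑ j, ∑ k, if j < k then f j k else 0 := by
  have hsplit : ∀ j k, f j k = (if j < k then f j k else 0) + if k < j then f k j else 0 := by
    intro j k
    rcases lt_trichotomy j k with h | rfl | h
    · simp [h, h.not_gt]
    · simp [hdiag]
    · simp [h, h.not_gt, hsymm j k]
  calc ∑ j, ∑ k, f j k
      = ∑ j, ∑ k, ((if j < k then f j k else 0) + if k < j then f k j else 0) := by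
        simp only [← hsplit]
    _ = 2 • ∑ j, ∑ k, if j < k then f j k else 0 := by
        simp only [two_nsmul, Finset.sum_add_distrib]
        exact congrArg _ Finset.sum_comm

theorem integral_abs_sub {a b c : ℝ} (h : a ∈ Icc c b) :
    ∫ t in c..b, |a - t| = ((a - c) ^ 2 + (b - a) ^ 2) / 2 := by
  have hcont : Continuous fun t : ℝ => |a - t| := by fun_prop
  have hleft : ∫ t in c..a, |a - t| = ∫ t in c..a, (a - t) := by
    refine integral_congr fun t ht => abs_of_nonneg ?_
    rw [uIcc_of_le h.1] at ht
    linarith [ht.2]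
  have hright : ∫ t in a..b, |a - t| = ∫ t in a..b, (t - a) := by
    refine integral_congr fun t ht => (abs_of_nonpos ?_).trans (neg_sub _ _)
    rw [uIcc_of_le h.2] at ht
    linarith [ht.1]
  rw [← integral_add_adjacent_intervals (hcont.intervalIntegrable c a)
      (hcont.intervalIntegrable a b), hleft, hright,
    integral_sub intervalIntegrable_const intervalIntegrable_id,
    integral_sub intervalIntegrable_id intervalIntegrable_const]
  simp only [intervalIntegral.integral_const, smul_eq_mul, integral_id]
  ring

theorem integral_integral_abs_sub {b c : ℝ} (hcb : c ≤ b) :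
    ∫ s in c..b, ∫ t in c..b, |s - t| = (b - c) ^ 3 / 3 := by
  rw [integral_congr fun s hs => integral_abs_sub (uIcc_of_le hcb ▸ hs),
    intervalIntegral.integral_div,
    intervalIntegral.integral_add ((by fun_prop : Continuous fun s : ℝ => (s - c) ^ 2).intervalIntegrable _ _)
      ((by fun_prop : Continuous fun s : ℝ => (b - s) ^ 2).intervalIntegrable _ _),
    integral_comp_sub_right (fun s => s ^ 2), integral_comp_sub_left (fun s => s ^ 2)]
  simp only [sub_self, integral_pow]
  ring

theorem IntervalIntegrable.indicator {E : Type*} [NormedAddCommGroup E] {f : ℝ → E} {a b : ℝ}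
    {μ : Measure ℝ} (hf : IntervalIntegrable f μ a b) {s : Set ℝ} (hs : MeasurableSet s) :
    IntervalIntegrable (s.indicator f) μ a b :=
  ⟨hf.1.indicator hs, hf.2.indicator hs⟩

theorem integral_indicator_Ici {E : Type*} [NormedAddCommGroup E] [NormedSpace ℝ E]
    {f : ℝ → E} {a b c : ℝ} (h : b ∈ Icc a c) :
    ∫ x in a..c, (Ici b).indicator f x = ∫ x in b..c, f x := by
  rw [integral_of_le (h.1.trans h.2), integral_of_le h.2]
  calc ∫ x in Ioc a c, (Ici b).indicator f x = ∫ x in Ioc a c, (Ioi b).indicator f x :=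
        integral_congr_ae (ae_restrict_of_ae (indicator_ae_eq_of_ae_eq_set Ioi_ae_eq_Ici.symm))
    _ = ∫ x in Ioc b c, f x := by
        rw [setIntegral_indicator measurableSet_Ioi, Ioc_inter_Ioi, sup_eq_right.2 h.1]

theorem natCard_le_eq_sum_indicator {ι : Type*} [Fintype ι] (x : ι → ℝ) (t : ℝ) :
    (Nat.card {j // x j ≤ t} : ℝ) = ∑ j, (Ici (x j)).indicator 1 t := by
  classical
  simp [Nat.card_eq_fintype_card, Fintype.card_subtype, indicator_apply]

theorem sq_sub_sum_indicator {ι : Type*} [Fintype ι] (a : ι → ℝ) (t : ℝ) :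
    (t - ∑ j, (Ici (a j)).indicator 1 t) ^ 2 =
      t ^ 2 - ∑ j, (Ici (a j)).indicator (fun s => 2 * s) t
        + ∑ j, ∑ k, (Ici (max (a j) (a k))).indicator 1 t := by
  have hmul : ∀ j k, (Ici (max (a j) (a k))).indicator (1 : ℝ → ℝ) t =
      (Ici (a j)).indicator 1 t * (Ici (a k)).indicator 1 t := fun j k => by
    rw [← Ici_inter_Ici, inter_indicator_one, Pi.mul_apply]
  have hlin : ∀ j, (Ici (a j)).indicator (fun s => 2 * s) t = 2 * t * (Ici (a j)).indicator 1 t :=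
    fun j => by simp [indicator_apply]
  simp only [hmul, hlin]
  rw [← Finset.sum_mul_sum, ← Finset.mul_sum]
  ring

theorem integral_sq_sub_sum_indicator {ι : Type*} [Fintype ι] {a : ι → ℝ} {b : ℝ}
    (ha : ∀ j, a j ∈ Icc 0 b) :
    ∫ t in (0:ℝ)..b, (t - ∑ j, (Ici (a j)).indicator 1 t) ^ 2 =
      b ^ 3 / 3 - ∑ j, (b ^ 2 - a j ^ 2) + ∑ j, ∑ k, (b - max (a j) (a k)) := by
  have hsum : ∀ g : ι → ℝ → ℝ, (∀ j, IntervalIntegrable (g j) volume 0 b) →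
      IntervalIntegrable (fun t => ∑ j, g j t) volume 0 b := fun g hg => by
    simpa only [Finset.sum_fn] using IntervalIntegrable.sum Finset.univ fun j _ => hg j
  have hsq : IntervalIntegrable (fun t : ℝ => t ^ 2) volume 0 b :=
    (continuous_pow 2).intervalIntegrable _ _
  have hlin : ∀ j, IntervalIntegrable ((Ici (a j)).indicator fun s : ℝ => 2 * s) volume 0 b :=
    fun j => ((continuous_const.mul continuous_id).intervalIntegrable _ _).indicator
      measurableSet_Ici
  have hone : ∀ c, IntervalIntegrable ((Ici c).indicator (1 : ℝ → ℝ)) volume 0 b :=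
    fun c => intervalIntegrable_const.indicator measurableSet_Ici
  have hpair : ∀ j, IntervalIntegrable
      (fun t => ∑ k, (Ici (max (a j) (a k))).indicator (1 : ℝ → ℝ) t) volume 0 b :=
    fun j => hsum _ fun k => hone _
  have hlin_int : ∀ j, ∫ t in (0:ℝ)..b, (Ici (a j)).indicator (fun s => 2 * s) t =
      b ^ 2 - a j ^ 2 := fun j => by
    rw [integral_indicator_Ici (ha j), intervalIntegral.integral_const_mul, integral_id]
    ring
  have hone_int : ∀ j k, ∫ t in (0:ℝ)..b, (Ici (max (a j) (a k))).indicator 1 t =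
      b - max (a j) (a k) := fun j k => by
    rw [integral_indicator_Ici ⟨(ha j).1.trans (le_max_left _ _), max_le (ha j).2 (ha k).2⟩]
    simp
  simp_rw [sq_sub_sum_indicator]
  rw [intervalIntegral.integral_add (hsq.sub (hsum _ hlin)) (hsum _ hpair),
    intervalIntegral.integral_sub hsq (hsum _ hlin), integral_pow,
    integral_finsetSum fun j _ => hlin j, integral_finsetSum fun j _ => hpair j]
  simp only [integral_finsetSum fun k _ => hone _, hlin_int, hone_int]
  norm_num

theorem oneD_jellium_energy_general (N : ℕ) (x : Fin N → ℝ)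
    (hx0 : ∀ j, 0 < x j) (hxN : ∀ j, x j < (N : ℝ)) :
    (∑ j : Fin N, ∑ k : Fin N, if j < k then -|x j - x k| / 2 else 0)
      - (∑ j : Fin N, ∫ t in (0:ℝ)..(N:ℝ), -|x j - t| / 2)
      + (1 / 2) * ∫ s in (0:ℝ)..(N:ℝ), ∫ t in (0:ℝ)..(N:ℝ), -|s - t| / 2
    = (1 / 2) * ∫ t in (0:ℝ)..(N:ℝ),
        (t - (Nat.card {j : Fin N // x j ≤ t} : ℝ)) ^ 2 := by
  have hx : ∀ j, x j ∈ Icc 0 (N : ℝ) := fun j => ⟨(hx0 j).le, (hxN j).le⟩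
  have hpairs := sum_sum_eq_two_nsmul_sum_sum_ite_lt (fun j k => -|x j - x k| / 2)
    (fun j k => by rw [abs_sub_comm]) (fun j => by simp)
  have hmax : ∀ a b : ℝ, (N : ℝ) - max a b = ((N - a) + (N - b) - |a - b|) / 2 := fun a b => by
    rw [sup_eq_half_smul_add_add_abs_sub' ℝ, abs_sub_comm, smul_eq_mul]
    ring
  have hsum_sq : ∑ j, ((N : ℝ) - x j) ^ 2 = N * N ^ 2 - 2 * N * ∑ j, x j + ∑ j, x j ^ 2 := by
    simp [sub_sq, Finset.sum_add_distrib, Finset.sum_sub_distrib, ← Finset.mul_sum]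
  simp only [intervalIntegral.integral_div, intervalIntegral.integral_neg,
    integral_abs_sub (hx _), integral_integral_abs_sub (Nat.cast_nonneg N),
    sub_zero, natCard_le_eq_sum_indicator, integral_sq_sub_sum_indicator hx, hmax]
  simp only [← Finset.sum_div, Finset.sum_neg_distrib, nsmul_eq_mul, Nat.cast_ofNat,
    Finset.sum_add_distrib, Finset.sum_sub_distrib, Finset.sum_const, Finset.card_univ,
    Fintype.card_fin, ← Finset.mul_sum] at hpairs ⊢
  linear_combination (-1 / 2 : ℝ) * hpairs + (1 / 4 : ℝ) * hsum_sq

/-- 1D jellium energy as the squared particle-excess function (equation (6.2)):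
for a neutral system of `N` unit charges at `0 < x₁ < ⋯ < x_N < N` in a uniform
background on `[0,N]`, with `V(s,t) = -|s-t|/2` and `K(t) = t - #{j : x_j ≤ t}`,
the sum of the particle-particle, particle-background and background-background
Coulomb energies equals `(1/2) ∫_0^N K(t)² dt`. -/
theorem oneD_jellium_energy (N : ℕ) (x : Fin N → ℝ) (hx : StrictMono x)
    (hx0 : ∀ j, 0 < x j) (hxN : ∀ j, x j < (N : ℝ)) :
    (∑ j : Fin N, ∑ k : Fin N, if j < k then -|x j - x k| / 2 else 0)
      - (∑ j : Fin N, ∫ t in (0:ℝ)..(N:ℝ), -|x j - t| / 2)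
      + (1 / 2) * ∫ s in (0:ℝ)..(N:ℝ), ∫ t in (0:ℝ)..(N:ℝ), -|s - t| / 2
    = (1 / 2) * ∫ t in (0:ℝ)..(N:ℝ),
        (t - (Nat.card {j : Fin N // x j ≤ t} : ℝ)) ^ 2 :=
  oneD_jellium_energy_general N x hx0 hxN
end
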